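/- arXiv:1306.5868 — 8 statements merged into one kernel-verified Lean document; each statement's English description precedes it below -/
import Mathlib

section
/- Let S ⊆ ℝ be compact with 0 ∉ S and at least n+1 points. If P is a polynomial of degree at most n with P(0) = 1 and there exist n+1 points x₀ < x₁ < ... < xₙ in S with |P(x_j)| = ‖P‖_S for all j, and P(x_j) = (−1)^{δ_j+1} P(x_{j+1}) where δ_j = 1 if x_j < 0 < x_{j+1} and δ_j = 0 otherwise, then P minimizes ‖·‖_S among polynomials Q of degree at most n with Q(0) = 1. -/
/-! If some `Q` with `Q(0) = 1` and `deg Q ≤ n` had `‖Q‖_S < ‖P‖_S`, then `P - Q` would have the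
sign of `P` at every extremal point `x_j` and would vanish at `0`, so `P - Q = X R` with `deg R < n`.
The sign of `R(x_j)` is that of `x_j P(x_j)`, and the alternation rule (the sign of `P` repeats
exactly when `x_j < 0 < x_{j+1}`, where the sign of `x` flips) makes it alternate strictly.
Hence `R` has a root in each of the `n` gaps `(x_j, x_{j+1})`, so `R = 0`, which is absurd. -/

open Polynomial

noncomputable def supNorm (S : Set ℝ) (P : ℝ[X]) : ℝ := sSup ((fun x => |P.eval x|) '' S)

lemma abs_eval_le_supNorm {S : Set ℝ} (hS : IsCompact S) (Q : ℝ[X]) {y : ℝ} (hy : y ∈ S) :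
    |Q.eval y| ≤ supNorm S Q :=
  le_csSup (hS.image Q.continuous.abs).bddAbove ⟨y, hy, rfl⟩

lemma mul_sub_pos_of_abs_lt_abs {a b : ℝ} (h : |b| < |a|) : 0 < a * (a - b) := by
  have hab : a * b ≤ |a| * |b| := by rw [← abs_mul]; exact le_abs_self _
  nlinarith [abs_mul_abs_self a, abs_nonneg b]

lemma mul_mul_mul_neg_of_eq_ite {a b u v : ℝ} (hab : a < b) (ha : a ≠ 0) (hb : b ≠ 0)
    (hv : v ≠ 0) (h : u = if a < 0 ∧ 0 < b then v else -v) : a * u * (b * v) < 0 := by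
  have hv2 : 0 < v * v := mul_self_pos.mpr hv
  split_ifs at h with hsign
  · subst h
    nlinarith [mul_pos_of_neg_of_neg hsign.1 (neg_neg_of_pos hsign.2)]
  · subst h
    have hab' : 0 < a * b := by
      rcases ha.lt_or_gt with ha' | ha'
      · exact mul_pos_of_neg_of_neg ha' (hb.lt_or_gt.resolve_right fun hb' => hsign ⟨ha', hb'⟩)
      · exact mul_pos ha' (ha'.trans hab)
    nlinarith

lemma exists_eval_eq_zero_of_eval_mul_neg (p : ℝ[X]) {a b : ℝ} (hab : a < b)
    (h : p.eval a * p.eval b < 0) : ∃ c ∈ Set.Ioo a b, p.eval c = 0 := by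
  have hcont : ContinuousOn (fun t => p.eval t) (Set.Icc a b) := p.continuous.continuousOn
  rcases mul_neg_iff.mp h with ⟨ha, hb⟩ | ⟨ha, hb⟩
  · exact intermediate_value_Ioo' hab.le hcont ⟨hb, ha⟩
  · exact intermediate_value_Ioo hab.le hcont ⟨ha, hb⟩

lemma le_natDegree_of_eval_mul_neg {n : ℕ} (p : ℝ[X]) {x : Fin (n + 1) → ℝ} (hx : StrictMono x)
    (h : ∀ j : Fin n, p.eval (x j.castSucc) * p.eval (x j.succ) < 0) : n ≤ p.natDegree := by
  by_contra! hdeg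
  choose y hy hy0 using fun j : Fin n =>
    exists_eval_eq_zero_of_eval_mul_neg p (hx (Fin.castSucc_lt_succ (i := j))) (h j)
  have hy_mono : StrictMono y := fun i j hij =>
    calc y i < x i.succ := (hy i).2
      _ ≤ x j.castSucc := hx.monotone (Fin.succ_le_castSucc_iff.mpr hij)
      _ < y j := (hy j).1
  have hp : p = 0 :=
    eq_zero_of_natDegree_lt_card_of_eval_eq_zero p hy_mono.injective hy0 (by simpa using hdeg)
  obtain ⟨j⟩ : Nonempty (Fin n) := ⟨⟨0, by omega⟩⟩
  simpa [hp] using h j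

theorem alternation_sufficient_general (n : ℕ) (S : Set ℝ) (hS : IsCompact S)
    (h0 : (0 : ℝ) ∉ S)
    (P : ℝ[X]) (hdeg : P.degree ≤ n) (hP0 : P.eval 0 = 1)
    (x : Fin (n + 1) → ℝ) (hmono : StrictMono x) (hxS : ∀ j, x j ∈ S)
    (hext : ∀ j, |P.eval (x j)| = supNorm S P)
    (halt : ∀ j : Fin n,
      P.eval (x j.castSucc) =
        (if x j.castSucc < 0 ∧ 0 < x j.succ then P.eval (x j.succ) else -P.eval (x j.succ))) :
    ∀ Q : ℝ[X], Q.degree ≤ n → Q.eval 0 = 1 → supNorm S P ≤ supNorm S Q := by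
  intro Q hQdeg hQ0
  by_contra! hlt
  have hx0 : ∀ j, x j ≠ 0 := fun j h => h0 (h ▸ hxS j)
  have hsign : ∀ j, 0 < P.eval (x j) * (P - Q).eval (x j) := fun j => by
    rw [eval_sub]
    exact mul_sub_pos_of_abs_lt_abs <|
      (abs_eval_le_supNorm hS Q (hxS j)).trans_lt (hext j ▸ hlt)
  have hP_ne : ∀ j, P.eval (x j) ≠ 0 := fun j h => by simpa [h] using hsign j
  obtain ⟨R, hR⟩ : X ∣ P - Q := X_dvd_iff.mpr <| by simp [coeff_zero_eq_eval_zero, hP0, hQ0]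
  have hR_ne : R ≠ 0 := by rintro rfl; simpa [hR] using hsign 0
  have hR_alt : ∀ j : Fin n, R.eval (x j.castSucc) * R.eval (x j.succ) < 0 := fun j => by
    have hs := hsign j.castSucc
    have hs' := hsign j.succ
    simp only [hR, eval_mul, eval_X] at hs hs'
    have := mul_mul_mul_neg_of_eq_ite (hmono (Fin.castSucc_lt_succ (i := j))) (hx0 _) (hx0 _)
      (hP_ne _) (halt j)
    -- `R(x_j)` has the sign of `x_j P(x_j)`, which alternates
    nlinarith [mul_pos hs hs']
  have hdeg_R : R.natDegree + 1 ≤ n := by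
    rw [← natDegree_X_mul hR_ne, ← hR, natDegree_le_iff_degree_le]
    exact (degree_sub_le P Q).trans (max_le hdeg hQdeg)
  have := le_natDegree_of_eval_mul_neg R hmono hR_alt
  omega

theorem alternation_sufficient (n : ℕ) (S : Set ℝ) (hS : IsCompact S)
    (h0 : (0 : ℝ) ∉ S) (hcard : (n + 1 : ℕ∞) ≤ S.encard)
    (P : ℝ[X]) (hdeg : P.degree ≤ n) (hP0 : P.eval 0 = 1)
    (x : Fin (n + 1) → ℝ) (hmono : StrictMono x) (hxS : ∀ j, x j ∈ S)
    (hext : ∀ j, |P.eval (x j)| = supNorm S P)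
    (halt : ∀ j : Fin n,
      P.eval (x j.castSucc) =
        (if x j.castSucc < 0 ∧ 0 < x j.succ then P.eval (x j.succ) else -P.eval (x j.succ))) :
    ∀ Q : ℝ[X], Q.degree ≤ n → Q.eval 0 = 1 → supNorm S P ≤ supNorm S Q :=
  alternation_sufficient_general n S hS h0 P hdeg hP0 x hmono hxS hext halt
end

section
/- Let P be a polynomial of exact degree n ≥ 1 with real coefficients having n simple real zeros, and suppose |P(y)| ≥ 1 for every critical point y of P (i.e., every real y with P'(y) = 0). Then the inverse image P⁻¹([−1,1]) = {z ∈ ℂ : P(z) ∈ [−1,1]} is contained in the real line. -/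
/-!
Fix t with |t| < 1. Around each real zero r of P take the largest interval (a, b) on which
|P| < 1. It contains no critical point of P, so by Rolle P is injective, hence strictly monotone,
on [a, b]; as |P(a)|, |P(b)| ≥ 1 > |P(r)|, it runs from ∓1 to ±1 and takes the value t inside.
Two zeros cannot share such a solution x, since then |P| < 1 between them and Rolle would again
give a forbidden critical point. So P - t has n distinct real zeros, and therefore no non-real
ones. For t = ±1 use the open mapping theorem: P⁻¹[-1, 1] lies in the closure of P⁻¹(-1, 1),
and the real line is closed.
-/

open Polynomial Set Filter

theorem Continuous.exists_gt_le_forall_Ico_lt {f : ℝ → ℝ} (hf : Continuous f) {r c : ℝ}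
    (hr : f r < c) (hK : ∃ x, r ≤ x ∧ c ≤ f x) :
    ∃ b, r < b ∧ c ≤ f b ∧ ∀ x ∈ Ico r b, f x < c := by
  set K := {x | r ≤ x ∧ c ≤ f x}
  have hKc : IsClosed K :=
    (isClosed_le continuous_const continuous_id).inter (isClosed_le continuous_const hf)
  have hKb : BddBelow K := ⟨r, fun _ hx ↦ hx.1⟩
  obtain ⟨hrb, hcb⟩ : sInf K ∈ K := hKc.csInf_mem hK hKb
  refine ⟨sInf K, hrb.lt_of_ne fun hr_eq ↦ hr.not_ge (hr_eq ▸ hcb), hcb, fun x hx ↦ ?_⟩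
  exact not_le.1 fun hcx ↦ (csInf_le hKb ⟨hx.1, hcx⟩).not_gt hx.2

theorem Polynomial.im_eq_zero_of_aeval_eq_zero {p : ℝ[X]} (hp : p ≠ 0)
    (hroots : p.roots.card = p.natDegree) {z : ℂ} (hz : aeval z p = 0) : z.im = 0 := by
  rw [aeval_def, ← mem_roots_map hp, ← roots_map_of_injective_of_card_eq_natDegree
    (algebraMap ℝ ℂ).injective hroots] at hz
  obtain ⟨x, -, rfl⟩ := Multiset.mem_map.1 hz
  simp

namespace Polynomial

variable {P : ℝ[X]}

theorem exists_Ioo_abs_eval_lt_one (hP : 0 < P.degree) {r : ℝ} (hr : |P.eval r| < 1) :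
    ∃ a b, a < r ∧ r < b ∧ 1 ≤ |P.eval a| ∧ 1 ≤ |P.eval b| ∧
      Ioo a b ⊆ {x | |P.eval x| < 1} := by
  obtain ⟨b, hrb, hb, hright⟩ := (continuous_abs.comp P.continuous).exists_gt_le_forall_Ico_lt hr
    ((eventually_ge_atTop r).and ((P.abs_tendsto_atTop hP).eventually_ge_atTop 1)).exists
  obtain ⟨a', hra, ha, hleft⟩ :=
    (continuous_abs.comp (P.continuous.comp continuous_neg)).exists_gt_le_forall_Ico_lt
      (r := -r) (c := 1) (by simpa using hr)
      ((eventually_ge_atTop (-r)).and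
        (((P.abs_tendsto_atBot hP).comp tendsto_neg_atTop_atBot).eventually_ge_atTop 1)).exists
  refine ⟨-a', b, by linarith, hrb, ha, hb, fun x hx ↦ ?_⟩
  rcases lt_or_ge x r with hxr | hxr
  · simpa using hleft (-x) ⟨by linarith, by linarith [hx.1]⟩
  · exact hright x ⟨hxr, hx.2⟩

variable (hcrit : ∀ y, P.derivative.eval y = 0 → 1 ≤ |P.eval y|)
include hcrit

theorem injOn_Icc_of_abs_eval_lt_one {a b : ℝ} (h : Ioo a b ⊆ {x | |P.eval x| < 1}) :
    InjOn P.eval (Icc a b) := by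
  intro x hx y hy hxy
  by_contra hne
  wlog hlt : x < y generalizing x y
  · exact this hy hx hxy.symm (Ne.symm hne) (lt_of_le_of_ne (not_lt.1 hlt) (Ne.symm hne))
  obtain ⟨c, hc, hc0⟩ := exists_deriv_eq_zero hlt P.continuous.continuousOn hxy
  rw [Polynomial.deriv] at hc0
  exact (hcrit c hc0).not_gt (h ⟨hx.1.trans_lt hc.1, hc.2.trans_le hy.2⟩)

theorem exists_eval_eq_of_abs_lt_one (hP : 0 < P.degree) {r : ℝ} (hr : |P.eval r| < 1)
    {t : ℝ} (ht : |t| < 1) : ∃ x, P.eval x = t ∧ uIcc r x ⊆ {y | |P.eval y| < 1} := by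
  obtain ⟨a, b, har, hrb, ha, hb, hab⟩ := exists_Ioo_abs_eval_lt_one hP hr
  have hab' : a ≤ b := (har.trans hrb).le
  have hr' : r ∈ Icc a b := ⟨har.le, hrb.le⟩
  have hmem : t ∈ P.eval '' Ioo a b := by
    rw [abs_lt] at hr ht
    rcases P.continuous.continuousOn.strictMonoOn_of_injOn_Icc' hab'
      (injOn_Icc_of_abs_eval_lt_one hcrit hab) with hmono | hanti
    · have h₁ := hmono (left_mem_Icc.2 hab') hr' har
      have h₂ := hmono hr' (right_mem_Icc.2 hab') hrb
      refine intermediate_value_Ioo hab' P.continuous.continuousOn ⟨?_, ?_⟩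
      · cases abs_cases (P.eval a) <;> linarith
      · cases abs_cases (P.eval b) <;> linarith
    · have h₁ := hanti (left_mem_Icc.2 hab') hr' har
      have h₂ := hanti hr' (right_mem_Icc.2 hab') hrb
      refine intermediate_value_Ioo' hab' P.continuous.continuousOn ⟨?_, ?_⟩
      · cases abs_cases (P.eval b) <;> linarith
      · cases abs_cases (P.eval a) <;> linarith
  obtain ⟨x, hx, rfl⟩ := hmem
  exact ⟨x, rfl, (ordConnected_Ioo.uIcc_subset ⟨har, hrb⟩ hx).trans hab⟩

theorem eq_of_eval_eq_of_uIcc_subset {r r' x : ℝ} (h : P.eval r = P.eval r')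
    (hr : uIcc r x ⊆ {y | |P.eval y| < 1}) (hr' : uIcc r' x ⊆ {y | |P.eval y| < 1}) :
    r = r' := by
  have hsub : uIcc r r' ⊆ {y | |P.eval y| < 1} := by
    rw [← uIcc_comm x r'] at hr'
    exact uIcc_subset_uIcc_union_uIcc.trans (union_subset hr hr')
  exact injOn_Icc_of_abs_eval_lt_one hcrit (Ioo_subset_Icc_self.trans hsub)
    left_mem_uIcc right_mem_uIcc h

theorem card_roots_sub_C_eq_natDegree (hP : 0 < P.degree)
    (hroots : P.roots.toFinset.card = P.natDegree) {t : ℝ} (ht : |t| < 1) :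
    (P - C t).roots.card = (P - C t).natDegree := by
  have hP0 : P ≠ 0 := ne_zero_of_degree_gt hP
  have hPt0 : P - C t ≠ 0 := ne_zero_of_degree_gt (hP.trans_eq (degree_sub_C hP).symm)
  have hroot : ∀ r ∈ P.roots.toFinset, P.eval r = 0 := fun r hr ↦ by
    simpa [mem_roots hP0] using hr
  choose! f hft hfU using fun r (hr : r ∈ P.roots.toFinset) ↦
    exists_eval_eq_of_abs_lt_one hcrit hP (r := r) (by simp [hroot r hr]) ht
  have hinj : P.roots.toFinset.card ≤ (P - C t).roots.toFinset.card := by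
    refine Finset.card_le_card_of_injOn f (fun r hr ↦ ?_) (fun r hr r' hr' h ↦ ?_)
    · simp [mem_roots hPt0, hft r hr]
    · exact eq_of_eval_eq_of_uIcc_subset hcrit ((hroot r hr).trans (hroot r' hr').symm)
        (hfU r hr) (h ▸ hfU r' hr')
  refine le_antisymm (card_roots' _) ?_
  calc (P - C t).natDegree = P.roots.toFinset.card := by rw [natDegree_sub_C, hroots]
    _ ≤ (P - C t).roots.toFinset.card := hinj
    _ ≤ (P - C t).roots.card := Multiset.toFinset_card_le _

end Polynomial


theorem inverse_image_real (n : ℕ) (hn : 1 ≤ n) (P : ℝ[X]) (hdeg : P.natDegree = n)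
    (hroots : P.roots.card = n ∧ P.roots.Nodup)
    (hcrit : ∀ y : ℝ, P.derivative.eval y = 0 → 1 ≤ |P.eval y|) :
    ∀ z : ℂ, (Polynomial.aeval z P ∈ (fun t : ℝ => (t : ℂ)) '' Set.Icc (-1 : ℝ) 1) → z.im = 0 := by
  have hP : 0 < P.degree := natDegree_pos_iff_degree_pos.1 (hdeg ▸ hn)
  have hdistinct : P.roots.toFinset.card = P.natDegree := by
    rw [Multiset.toFinset_card_of_nodup hroots.2, hroots.1, hdeg]
  have hopen : IsOpenMap fun z : ℂ ↦ aeval z P := by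
    simpa [aeval_def, eval_map] using ((P.map (algebraMap ℝ ℂ)).isOpenQuotientMap_eval
      (by rw [natDegree_map]; omega)).isOpenMap
  have hstrict : (fun z : ℂ ↦ aeval z P) ⁻¹' ((↑) '' Ioo (-1 : ℝ) 1) ⊆ {z | z.im = 0} := by
    rintro z ⟨t, ht, hzt⟩
    refine im_eq_zero_of_aeval_eq_zero (ne_zero_of_degree_gt (hP.trans_eq (degree_sub_C hP).symm))
      (card_roots_sub_C_eq_natDegree hcrit hP hdistinct (abs_lt.2 ht)) ?_
    simp [hzt]
  have hclosure : closure ((↑) '' Ioo (-1 : ℝ) 1) = ((↑) '' Icc (-1 : ℝ) 1 : Set ℂ) := by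
    rw [Complex.isometry_ofReal.isClosedEmbedding.closure_image_eq, closure_Ioo (by norm_num)]
  intro z hz
  exact closure_minimal hstrict (isClosed_eq Complex.continuous_im continuous_const)
    (hopen.preimage_closure_subset_closure_preimage (hclosure ▸ hz))
end

section
/- Let P be a polynomial of exact degree n ≥ 1 such that A := P⁻¹([−1,1]) ⊆ ℝ. Then all coefficients of P are real, P has n simple real zeros, and |P(y)| ≥ 1 for every real critical point y of P. -/
/-!
All roots of `P` are real (they lie in `P⁻¹{0}`), and so is a point `x` with `P x = 1`; writing
`P = c ∏ (X - a)` and evaluating at `x` shows `c` is real, so `P` has real coefficients.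

If `y` were a real critical point with `|P y| < 1`, then `P - P y = (X - y)ᵐ H` with `m ≥ 2` and
`H y` real and nonzero. On a small upper half-circle `z = y + ε e^{iθ}`, `(e^{iθ})ᵐ` passes through
`i` and `-i` while `H z` stays close to `H y`, so `Im P` vanishes at some non-real `z` where
`|P z| < 1`, contradicting `P⁻¹([-1,1]) ⊆ ℝ`. A multiple root is such a critical point.
-/

open Polynomial ComplexConjugate Set Real

lemma eval_map_conj_ofReal (P : ℂ[X]) (x : ℝ) :
    (P.map conj).eval (x : ℂ) = conj (P.eval (x : ℂ)) := by
  rw [eval_map, ← Complex.conj_ofReal x, eval₂_at_apply, Complex.conj_ofReal]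

lemma eval_ofReal_im_eq_zero_of_map_conj {P : ℂ[X]} (hP : P.map conj = P) (x : ℝ) :
    (P.eval (x : ℂ)).im = 0 :=
  Complex.conj_eq_iff_im.mp (by rw [← eval_map_conj_ofReal, hP])

lemma map_conj_eq_self_of_roots_im_eq_zero {P : ℂ[X]} (hroots : ∀ z ∈ P.roots, z.im = 0)
    {x : ℝ} (hx : (P.eval (x : ℂ)).im = 0) (hx0 : P.eval (x : ℂ) ≠ 0) :
    P.map conj = P := by
  set R : ℂ[X] := (P.roots.map fun a => X - C a).prod
  have hP : C P.leadingCoeff * R = P :=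
    C_leadingCoeff_mul_prod_multiset_X_sub_C IsAlgClosed.card_roots_eq_natDegree
  have hR : R.map conj = R := by
    simp only [R, Polynomial.map_multiset_prod, Multiset.map_map]
    refine congrArg _ (Multiset.map_congr rfl fun a ha => ?_)
    simp [Complex.conj_eq_iff_im.mpr (hroots a ha)]
  have hRx : R.eval (x : ℂ) ≠ 0 := by
    intro h
    exact hx0 (by rw [← hP, eval_mul, h, mul_zero])
  have hlc : conj P.leadingCoeff = P.leadingCoeff := by
    refine mul_right_cancel₀ hRx ?_
    calc conj P.leadingCoeff * R.eval (x : ℂ) = (P.map conj).eval (x : ℂ) := by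
          conv_rhs => rw [← hP]
          rw [Polynomial.map_mul, map_C, hR, eval_mul, eval_C]
      _ = P.eval (x : ℂ) := by rw [eval_map_conj_ofReal, Complex.conj_eq_iff_im.mpr hx]
      _ = P.leadingCoeff * R.eval (x : ℂ) := by
          conv_lhs => rw [← hP]
          rw [eval_mul, eval_C]
  rw [← hP, Polynomial.map_mul, map_C, hlc, hR]

lemma exists_mem_Ioo_im_exp_pow_mul_eq_zero {m : ℕ} (hm : 2 ≤ m) {h : ℝ → ℂ}
    (hh : Continuous h) {c : ℝ} (hc : ∀ θ, ‖h θ - c‖ < |c|) :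
    ∃ θ ∈ Ioo 0 π, (Complex.exp (θ * Complex.I) ^ m * h θ).im = 0 := by
  have hre : ∀ θ, 0 < c * (h θ).re := by
    intro θ
    have := (Complex.abs_re_le_norm _).trans_lt (hc θ)
    rw [Complex.sub_re, Complex.ofReal_re] at this
    rcases abs_cases c with ⟨hc', _⟩ | ⟨hc', _⟩ <;> rw [hc'] at this <;>
      cases abs_lt.mp this <;> nlinarith
  have hm' : (2 : ℝ) ≤ m := by exact_mod_cast hm
  -- At `θ = kπ/(2m)`, `k = 1, 3`, the factor `(e^{iθ})ᵐ` is `±i`; both points lie in `(0, π)`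
  -- because `m ≥ 2`.
  have hexp : ∀ k : ℝ, Complex.exp (((k * π / (2 * m) : ℝ) : ℂ) * Complex.I) ^ m =
      Complex.exp ((k : ℂ) * (π / 2 * Complex.I)) := by
    intro k
    have hm0 : (m : ℂ) ≠ 0 := by exact_mod_cast (by omega : m ≠ 0)
    rw [← Complex.exp_nat_mul]
    congr 1
    push_cast
    field_simp
  set g : ℝ → ℝ := fun θ => c * (Complex.exp (θ * Complex.I) ^ m * h θ).im
  have hg : Continuous g := by fun_prop
  have hg₁ : 0 < g (1 * π / (2 * m)) := by
    simp only [g]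
    rw [hexp, Complex.ofReal_one, one_mul, Complex.exp_pi_div_two_mul_I]
    simpa using hre _
  have hg₃ : g (3 * π / (2 * m)) < 0 := by
    have : Complex.exp ((3 : ℝ) * (π / 2 * Complex.I)) = -Complex.I := by
      rw [show ((3 : ℝ) : ℂ) * (π / 2 * Complex.I) = π * Complex.I + π / 2 * Complex.I by
        push_cast; ring, Complex.exp_add, Complex.exp_pi_mul_I, Complex.exp_pi_div_two_mul_I]
      ring
    simp only [g]
    rw [hexp, this]
    simpa using hre _
  have hπ := pi_pos
  obtain ⟨θ, hθ, hgθ⟩ := intermediate_value_Icc' (by gcongr; norm_num) hg.continuousOn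
    ⟨hg₃.le, hg₁.le⟩
  refine ⟨θ, ⟨?_, ?_⟩, ?_⟩
  · exact lt_of_lt_of_le (by positivity) hθ.1
  · refine lt_of_le_of_lt hθ.2 ?_
    rw [div_lt_iff₀ (by positivity)]
    nlinarith
  · have hc0 : c ≠ 0 := fun h0 => by simpa [h0] using hre 0
    exact (mul_eq_zero.mp hgθ).resolve_left hc0

lemma exists_dist_lt_im_pos_eval_im_eq_zero {F : ℂ[X]} (hF : F.map conj = F) {y : ℝ}
    (hy : 2 ≤ rootMultiplicity (y : ℂ) F) {δ : ℝ} (hδ : 0 < δ) :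
    ∃ z : ℂ, dist z y < δ ∧ 0 < z.im ∧ (F.eval z).im = 0 := by
  have hF0 : F ≠ 0 := by rintro rfl; simp at hy
  obtain ⟨H, hFH, hndvd⟩ := F.exists_eq_pow_rootMultiplicity_mul_and_not_dvd hF0 y
  set m := rootMultiplicity (y : ℂ) F
  have hH : H.map conj = H := by
    have hXy : ((X - C (y : ℂ)) ^ m).map conj = (X - C (y : ℂ)) ^ m := by simp
    refine mul_left_cancel₀ (pow_ne_zero m (X_sub_C_ne_zero (y : ℂ))) ?_
    rw [← hFH, ← hXy, ← Polynomial.map_mul, ← hFH, hF]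
  set c := (H.eval (y : ℂ)).re
  have hc : H.eval (y : ℂ) = c :=
    Complex.ext rfl (by simp [eval_ofReal_im_eq_zero_of_map_conj hH])
  have hc0 : c ≠ 0 := fun h0 =>
    hndvd (dvd_iff_isRoot.mpr (by rw [IsRoot, hc, h0, Complex.ofReal_zero]))
  obtain ⟨δ₁, hδ₁, hnear⟩ :=
    Metric.continuousAt_iff.mp (H.continuousAt (a := (y : ℂ))) |c| (abs_pos.mpr hc0)
  obtain ⟨ε, hε, hεδ, hεδ₁⟩ : ∃ ε, 0 < ε ∧ ε < δ ∧ ε < δ₁ :=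
    ⟨min δ δ₁ / 2, by positivity, by linarith [min_le_left δ δ₁, lt_min hδ hδ₁],
      by linarith [min_le_right δ δ₁, lt_min hδ hδ₁]⟩
  set z : ℝ → ℂ := fun θ => y + ε * Complex.exp (θ * Complex.I)
  have hz : ∀ θ, dist (z θ) y = ε := by
    intro θ
    simp [z, Complex.norm_exp_ofReal_mul_I, abs_of_pos hε]
  have hzδ : ∀ θ, dist (z θ) y < δ ∧ dist (z θ) y < δ₁ := fun θ => hz θ ▸ ⟨hεδ, hεδ₁⟩
  obtain ⟨θ, hθ, hθ0⟩ := exists_mem_Ioo_im_exp_pow_mul_eq_zero (h := fun θ => H.eval (z θ))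
    (by omega) (H.continuous.comp (by fun_prop)) (c := c)
    (fun θ => by rw [← hc, ← dist_eq_norm]; exact hnear (hzδ θ).2)
  refine ⟨z θ, (hzδ θ).1, ?_, ?_⟩
  · simpa [z, Complex.exp_ofReal_mul_I_im] using mul_pos hε (sin_pos_of_pos_of_lt_pi hθ.1 hθ.2)
  · rw [hFH, eval_mul, eval_pow, eval_sub, eval_X, eval_C, add_sub_cancel_left, mul_pow,
      mul_assoc, ← Complex.ofReal_pow, Complex.im_ofReal_mul, hθ0, mul_zero]

lemma nodup_roots_of_forall_eval_ne_zero {P : ℂ[X]} (hroots : ∀ z ∈ P.roots, z.im = 0)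
    (hcrit : ∀ y : ℝ, P.derivative.eval (y : ℂ) = 0 → P.eval (y : ℂ) ≠ 0) : P.roots.Nodup := by
  classical
  refine Multiset.nodup_iff_count_le_one.mpr fun a => not_lt.mp fun ha => ?_
  have hmem : a ∈ P.roots := Multiset.count_pos.mp (by omega)
  rw [count_roots] at ha
  obtain ⟨hroot, hder⟩ := (one_lt_rootMultiplicity_iff_isRoot (ne_zero_of_mem_roots hmem)).mp ha
  have ha : (a.re : ℂ) = a := Complex.ext rfl (by simp [hroots a hmem])
  exact hcrit a.re (ha ▸ hder) (ha ▸ hroot)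

lemma one_le_norm_eval_of_derivative_eq_zero {P : ℂ[X]} (hP : 0 < P.natDegree)
    (hconj : P.map conj = P)
    (hA : ∀ z : ℂ, (P.eval z ∈ (fun t : ℝ => (t : ℂ)) '' Icc (-1 : ℝ) 1) → z.im = 0)
    {y : ℝ} (hy : P.derivative.eval (y : ℂ) = 0) : 1 ≤ ‖P.eval (y : ℂ)‖ := by
  by_contra! hlt
  set v := P.eval (y : ℂ)
  have hv : conj v = v := Complex.conj_eq_iff_im.mpr (eval_ofReal_im_eq_zero_of_map_conj hconj y)
  set F := P - C v
  have hF : F.map conj = F := by rw [Polynomial.map_sub, hconj, map_C, hv]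
  have hF0 : F ≠ 0 := ne_zero_of_natDegree_gt (n := 0) (by rwa [natDegree_sub_C])
  have hmult : 1 < rootMultiplicity (y : ℂ) F :=
    (one_lt_rootMultiplicity_iff_isRoot hF0).mpr ⟨by simp [F, v], by simpa [F] using hy⟩
  obtain ⟨δ, hδ, hnear⟩ :=
    Metric.continuousAt_iff.mp (P.continuousAt (a := (y : ℂ))) (1 - ‖v‖) (by linarith)
  obtain ⟨z, hzδ, hzim, hFz⟩ := exists_dist_lt_im_pos_eval_im_eq_zero hF hmult hδ
  have hPz : (P.eval z).im = 0 := by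
    simpa [F, Complex.conj_eq_iff_im.mp hv] using hFz
  have hnorm : ‖P.eval z‖ ≤ 1 := by
    have := norm_le_norm_add_norm_sub' (P.eval z) v
    linarith [dist_eq_norm (P.eval z) v ▸ hnear hzδ]
  refine hzim.ne' (hA z ⟨(P.eval z).re, abs_le.mp ((Complex.abs_re_le_norm _).trans hnorm), ?_⟩)
  exact Complex.ext rfl (by simp [hPz])

theorem inverse_image_real_converse (n : ℕ) (hn : 1 ≤ n) (P : ℂ[X]) (hdeg : P.natDegree = n)
    (hA : ∀ z : ℂ, (P.eval z ∈ (fun t : ℝ => (t : ℂ)) '' Set.Icc (-1 : ℝ) 1) → z.im = 0) :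
    (∀ k, (P.coeff k).im = 0) ∧
    P.roots.card = n ∧ P.roots.Nodup ∧ (∀ z ∈ P.roots, z.im = 0) ∧
    (∀ y : ℝ, P.derivative.eval (y : ℂ) = 0 → 1 ≤ ‖P.eval (y : ℂ)‖) := by
  have hP : 0 < P.natDegree := by omega
  have hroots : ∀ z ∈ P.roots, z.im = 0 := fun z hz =>
    hA z ⟨0, by norm_num, by simp [(isRoot_of_mem_roots hz).eq_zero]⟩
  obtain ⟨x, hx⟩ : ∃ x : ℝ, P.eval (x : ℂ) = 1 := by
    obtain ⟨z, hz⟩ := IsAlgClosed.exists_root (P - C 1)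
      (natDegree_pos_iff_degree_pos.mp (by rwa [natDegree_sub_C])).ne'
    have hz1 : P.eval z = 1 := sub_eq_zero.mp (by simpa using hz)
    have hzim : z.im = 0 := hA z ⟨1, by norm_num, by simp [hz1]⟩
    exact ⟨z.re, by rwa [show (z.re : ℂ) = z from Complex.ext rfl (by simp [hzim])]⟩
  have hconj : P.map conj = P :=
    map_conj_eq_self_of_roots_im_eq_zero hroots (x := x) (by simp [hx]) (by simp [hx])
  have hcrit : ∀ y : ℝ, P.derivative.eval (y : ℂ) = 0 → 1 ≤ ‖P.eval (y : ℂ)‖ :=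
    fun y => one_le_norm_eval_of_derivative_eq_zero hP hconj hA
  refine ⟨fun k => ?_, IsAlgClosed.card_roots_eq_natDegree.trans hdeg,
    nodup_roots_of_forall_eval_ne_zero hroots fun y hy h0 => ?_, hroots, hcrit⟩
  · exact Complex.conj_eq_iff_im.mp (by simpa using congrArg (coeff · k) hconj)
  · exact (hcrit y hy).not_gt (by simp [h0])
end

section
/- Let P be a polynomial of exact degree n with real coefficients such that A := {x ∈ ℝ : −1 ≤ P(x) ≤ 1} satisfies 0 ∉ A, P has n simple real zeros, and |P(y)| ≥ 1 for all critical points y. Then R(x) := P(x)/P(0) is the minimal residual polynomial for degree n on A; in particular L_n(A) := min{‖Q‖_A : deg Q ≤ n, Q(0) = 1} = 1/|P(0)|. -/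
open Polynomial

/-!
Around every zero `r` of `P` take the largest interval `(a, b)` on which `|P| < 1`. By Rolle,
the condition on the critical values forces `P a = -P b = ±1`, and it also separates distinct
zeros, so the `n` intervals are disjoint; they lie in `A`, hence avoid `0`. If `Q(0) = 1` and
`|Q| < 1 / |P 0|` on `A`, then `P / P 0 - Q` changes sign on each of the intervals and vanishes
at `0`: `n + 1` zeros for a nonzero polynomial of degree at most `n`.
-/

open Set Filter

lemma sub_mul_pos_of_abs_lt_abs {u v : ℝ} (h : |v| < |u|) : 0 < (u - v) * u := by
  have huv : u * v ≤ |u| * |v| := abs_mul u v ▸ le_abs_self _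
  nlinarith [abs_mul_abs_self u, abs_nonneg v]

namespace Continuous

variable {f : ℝ → ℝ}

lemma exists_lt_eq_forall_Ioc_lt (hf : Continuous f) {c x r : ℝ} (hxr : x ≤ r) (hx : c ≤ f x)
    (hr : f r < c) : ∃ a < r, f a = c ∧ ∀ y ∈ Ioc a r, f y < c := by
  obtain ⟨a, ⟨⟨hxa, har⟩, hca⟩, hmax⟩ :=
    (isCompact_Icc.inter_right (isClosed_le continuous_const hf)).exists_isGreatest
      ⟨x, ⟨le_rfl, hxr⟩, hx⟩
  have hlast : ∀ y ∈ Icc a r, c ≤ f y → y ≤ a := fun y hy hcy =>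
    hmax ⟨⟨hxa.trans hy.1, hy.2⟩, hcy⟩
  have har' : a < r := har.lt_of_ne (by rintro rfl; exact hca.not_gt hr)
  obtain ⟨z, hz, hfz⟩ := intermediate_value_Icc' har hf.continuousOn ⟨hr.le, hca⟩
  have hza : z = a := (hlast z hz hfz.ge).antisymm hz.1
  exact ⟨a, har', hza ▸ hfz, fun y hy => not_le.1 fun hcy =>
    (hlast y (Ioc_subset_Icc_self hy) hcy).not_gt hy.1⟩

lemma exists_gt_eq_forall_Ico_lt (hf : Continuous f) {c x r : ℝ} (hrx : r ≤ x) (hx : c ≤ f x)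
    (hr : f r < c) : ∃ b > r, f b = c ∧ ∀ y ∈ Ico r b, f y < c := by
  obtain ⟨a, har, ha, hlt⟩ := (hf.comp continuous_neg).exists_lt_eq_forall_Ioc_lt (x := -x)
    (neg_le_neg hrx) (by simpa using hx) (by simpa using hr)
  refine ⟨-a, lt_neg_of_lt_neg har, ha, fun y hy => ?_⟩
  simpa using hlt (-y) ⟨lt_neg_of_lt_neg hy.2, neg_le_neg hy.1⟩

lemma exists_mem_Ioo_eq_of_abs_lt_abs {g : ℝ → ℝ} (hf : Continuous f) (hg : Continuous g)
    {a b : ℝ} (hab : a ≤ b) (hfab : f a * f b < 0) (ha : |g a| < |f a|) (hb : |g b| < |f b|) :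
    ∃ w ∈ Ioo a b, f w = g w := by
  have hsa := sub_mul_pos_of_abs_lt_abs ha
  have hsb := sub_mul_pos_of_abs_lt_abs hb
  have hsub : (f a - g a) * (f b - g b) < 0 := by
    by_contra! h
    nlinarith [mul_pos hsa hsb, mul_nonneg h (neg_nonneg.2 hfab.le)]
  have hcont : ContinuousOn (fun x => f x - g x) (Icc a b) := (hf.sub hg).continuousOn
  obtain ⟨w, hw, hw0⟩ : ∃ w ∈ Ioo a b, f w - g w = 0 := by
    rcases mul_neg_iff.1 hsub with ⟨h1, h2⟩ | ⟨h1, h2⟩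
    · exact intermediate_value_Ioo' hab hcont ⟨h2, h1⟩
    · exact intermediate_value_Ioo hab hcont ⟨h1, h2⟩
  exact ⟨w, hw, sub_eq_zero.1 hw0⟩

end Continuous

namespace Polynomial

variable {P : ℝ[X]}

lemma exists_one_le_abs_eval_of_eval_eq
    (hcrit : ∀ y, P.derivative.eval y = 0 → 1 ≤ |P.eval y|) {a b : ℝ} (hab : a < b)
    (h : P.eval a = P.eval b) : ∃ y ∈ Ioo a b, 1 ≤ |P.eval y| := by
  obtain ⟨y, hy, hy0⟩ := exists_deriv_eq_zero hab P.continuousOn h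
  exact ⟨y, hy, hcrit y (P.deriv ▸ hy0)⟩

lemma eq_of_isRoot_of_forall_uIcc (hcrit : ∀ y, P.derivative.eval y = 0 → 1 ≤ |P.eval y|)
    {r s : ℝ} (hr : P.IsRoot r) (hs : P.IsRoot s) (h : ∀ x ∈ uIcc r s, |P.eval x| < 1) :
    r = s := by
  by_contra hne
  obtain ⟨y, hy, hy1⟩ := exists_one_le_abs_eval_of_eval_eq hcrit (inf_lt_sup.2 hne)
    ((min_rec' P.IsRoot hr hs).eq_zero.trans (max_rec' P.IsRoot hr hs).eq_zero.symm)
  exact (h y (Ioo_subset_Icc_self hy)).not_ge hy1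

lemma exists_abs_eval_lt_one_on_Ioo_of_isRoot
    (hcrit : ∀ y, P.derivative.eval y = 0 → 1 ≤ |P.eval y|) (hP : 0 < P.degree) {r : ℝ}
    (hr : P.IsRoot r) : ∃ a b, r ∈ Ioo a b ∧ |P.eval a| = 1 ∧ |P.eval b| = 1 ∧
      P.eval a * P.eval b < 0 ∧ ∀ x ∈ Ioo a b, |P.eval x| < 1 := by
  have hcont : Continuous fun x => |P.eval x| := P.continuous.abs
  have hr1 : |P.eval r| < 1 := by simp [hr.eq_zero]
  obtain ⟨x, hx1, hxr⟩ := ((P.tendsto_abv_atTop abs hP tendsto_abs_atBot_atTop)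
    |>.eventually_ge_atTop 1 |>.and (eventually_le_atBot r)).exists
  obtain ⟨x', hx'1, hrx'⟩ := ((P.tendsto_abv_atTop abs hP tendsto_abs_atTop_atTop)
    |>.eventually_ge_atTop 1 |>.and (eventually_ge_atTop r)).exists
  obtain ⟨a, har, ha, hlta⟩ := hcont.exists_lt_eq_forall_Ioc_lt hxr hx1 hr1
  obtain ⟨b, hrb, hb, hltb⟩ := hcont.exists_gt_eq_forall_Ico_lt hrx' hx'1 hr1
  have hlt : ∀ x ∈ Ioo a b, |P.eval x| < 1 := fun x hx =>
    (le_or_gt x r).elim (fun h => hlta x ⟨hx.1, h⟩) (fun h => hltb x ⟨h.le, hx.2⟩)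
  have hne : P.eval a ≠ P.eval b := fun h =>
    let ⟨y, hy, hy1⟩ := exists_one_le_abs_eval_of_eval_eq hcrit (har.trans hrb) h
    (hlt y hy).not_ge hy1
  refine ⟨a, b, ⟨har, hrb⟩, ha, hb, ?_, hlt⟩
  obtain h | h := abs_eq_abs.1 (ha.trans hb.symm)
  · exact absurd h hne
  · have hb0 : P.eval b ≠ 0 := fun h0 => by simp [h0] at hb
    rw [h, neg_mul, neg_neg_iff_pos]
    exact mul_self_pos.2 hb0

lemma exists_isRoot_C_mul_sub_near (hcrit : ∀ y, P.derivative.eval y = 0 → 1 ≤ |P.eval y|)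
    (hP : 0 < P.degree) {r : ℝ} (hr : P.IsRoot r) {Q : ℝ[X]} {c : ℝ}
    (hQ : ∀ x, |P.eval x| = 1 → |Q.eval x| < |c|) :
    ∃ w, (C c * P - Q).IsRoot w ∧ ∀ x ∈ uIcc r w, |P.eval x| < 1 := by
  obtain ⟨a, b, hrab, ha, hb, hab, hlt⟩ := exists_abs_eval_lt_one_on_Ioo_of_isRoot hcrit hP hr
  have hc : c ≠ 0 := by rintro rfl; exact (abs_nonneg _).not_gt (by simpa using hQ a ha)
  obtain ⟨w, hw, hcw⟩ := Continuous.exists_mem_Ioo_eq_of_abs_lt_abs (f := fun x => c * P.eval x)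
    (by fun_prop) Q.continuous (hrab.1.trans hrab.2).le
    (by nlinarith [mul_self_pos.2 hc] : c * P.eval a * (c * P.eval b) < 0)
    (by rw [abs_mul, ha, mul_one]; exact hQ a ha) (by rw [abs_mul, hb, mul_one]; exact hQ b hb)
  refine ⟨w, by simp [hcw], fun x hx => hlt x ?_⟩
  exact ordConnected_Ioo.uIcc_subset hrab hw hx

lemma card_roots_toFinset_le (hcrit : ∀ y, P.derivative.eval y = 0 → 1 ≤ |P.eval y|)
    {s : Finset ℝ} (h : ∀ r, P.IsRoot r → ∃ w ∈ s, ∀ x ∈ uIcc r w, |P.eval x| < 1) :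
    P.roots.toFinset.card ≤ s.card :=
  -- two zeros joined to the same `w` inside `{|P| < 1}` are joined to each other, hence equal
  Finset.card_le_card_of_forall_subsingleton (fun r w : ℝ => ∀ x ∈ uIcc r w, |P.eval x| < 1)
    (fun r hr => h r (isRoot_of_mem_roots (Multiset.mem_toFinset.1 hr)))
    fun w _ _ ⟨hr, hrw⟩ _ ⟨hs, hsw⟩ =>
      eq_of_isRoot_of_forall_uIcc hcrit (isRoot_of_mem_roots (Multiset.mem_toFinset.1 hr))
        (isRoot_of_mem_roots (Multiset.mem_toFinset.1 hs)) fun x hx =>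
          (uIcc_subset_uIcc_union_uIcc (b := w) hx).elim (hrw x) fun hx =>
            hsw x (by rwa [uIcc_comm])

lemma card_roots_toFinset_lt_natDegree (hcrit : ∀ y, P.derivative.eval y = 0 → 1 ≤ |P.eval y|)
    (h0 : 1 < |P.eval 0|) {g : ℝ[X]} (hg : g ≠ 0) (hg0 : g.IsRoot 0)
    (hnear : ∀ r, P.IsRoot r → ∃ w, g.IsRoot w ∧ ∀ x ∈ uIcc r w, |P.eval x| < 1) :
    P.roots.toFinset.card < g.natDegree := by
  have hmem {w : ℝ} (hw : g.IsRoot w) : w ∈ g.roots.toFinset :=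
    Multiset.mem_toFinset.2 ((mem_roots hg).2 hw)
  calc P.roots.toFinset.card ≤ (g.roots.toFinset.erase 0).card := by
        refine card_roots_toFinset_le hcrit fun r hr => ?_
        obtain ⟨w, hw, hwP⟩ := hnear r hr
        refine ⟨w, Finset.mem_erase.2 ⟨?_, hmem hw⟩, hwP⟩
        rintro rfl
        exact (hwP 0 right_mem_uIcc).not_gt h0
    _ < g.roots.toFinset.card := Finset.card_erase_lt_of_mem (hmem hg0)
    _ ≤ g.natDegree := (Multiset.toFinset_card_le _).trans (card_roots' g)

lemma exists_abs_eval_eq_one_le_abs_eval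
    (hcrit : ∀ y, P.derivative.eval y = 0 → 1 ≤ |P.eval y|) (hP : 0 < P.degree)
    (hroots : P.roots.card = P.natDegree) (hnodup : P.roots.Nodup) (h0 : 1 < |P.eval 0|)
    {Q : ℝ[X]} (hQ : Q.natDegree ≤ P.natDegree) (hQ0 : Q.eval 0 = 1) :
    ∃ x, |P.eval x| = 1 ∧ |(P.eval 0)⁻¹| ≤ |Q.eval x| := by
  by_contra! hlt
  obtain ⟨r, hr⟩ :=
    Multiset.card_pos_iff_exists_mem.1 (hroots ▸ natDegree_pos_iff_degree_pos.2 hP)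
  obtain ⟨a, -, -, ha, -⟩ :=
    exists_abs_eval_lt_one_on_Ioo_of_isRoot hcrit hP (isRoot_of_mem_roots hr)
  have hg : C (P.eval 0)⁻¹ * P - Q ≠ 0 := fun hg => (hlt a ha).ne <| by
    rw [← sub_eq_zero.1 hg, eval_mul, eval_C, abs_mul, ha, mul_one]
  have hg0 : (C (P.eval 0)⁻¹ * P - Q).IsRoot 0 := by
    simp only [IsRoot.def, eval_sub, eval_mul, eval_C, hQ0]
    exact sub_eq_zero.2 (inv_mul_cancel₀ (abs_pos.1 (one_pos.trans h0)))
  have hlt_deg := card_roots_toFinset_lt_natDegree hcrit h0 hg hg0 fun r hr =>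
    exists_isRoot_C_mul_sub_near hcrit hP hr hlt
  rw [Multiset.toFinset_card_of_nodup hnodup, hroots] at hlt_deg
  exact hlt_deg.not_ge <|
    (natDegree_sub_le_of_le (natDegree_C_mul_le _ _) hQ).trans (max_self _).le

end Polynomial

lemma supNorm_C_mul_of_abs_eval_eq_one {P : ℝ[X]} {a : ℝ} (ha : |P.eval a| = 1) (c : ℝ) :
    supNorm {x | P.eval x ∈ Icc (-1 : ℝ) 1} (C c * P) = |c| := by
  refine IsGreatest.csSup_eq ⟨⟨a, abs_le.1 ha.le, by simp [ha]⟩, ?_⟩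
  rintro _ ⟨x, hx, rfl⟩
  simpa [abs_mul] using mul_le_of_le_one_right (abs_nonneg c) (abs_le.2 hx)

theorem minimal_residual_of_inverse_image (n : ℕ) (hn : 1 ≤ n) (P : ℝ[X])
    (hdeg : P.natDegree = n)
    (hroots : P.roots.card = n ∧ P.roots.Nodup)
    (hcrit : ∀ y : ℝ, P.derivative.eval y = 0 → 1 ≤ |P.eval y|)
    (h0 : (0 : ℝ) ∉ {x : ℝ | P.eval x ∈ Set.Icc (-1 : ℝ) 1}) :
    supNorm {x : ℝ | P.eval x ∈ Set.Icc (-1 : ℝ) 1} (Polynomial.C (P.eval 0)⁻¹ * P)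
        = 1 / |P.eval 0| ∧
    ∀ Q : ℝ[X], Q.degree ≤ n → Q.eval 0 = 1 →
      1 / |P.eval 0| ≤ supNorm {x : ℝ | P.eval x ∈ Set.Icc (-1 : ℝ) 1} Q := by
  have hP : 0 < P.degree := natDegree_pos_iff_degree_pos.1 (hdeg ▸ hn)
  have hc : 1 < |P.eval 0| := by simpa [← abs_le] using h0
  obtain ⟨r, hr⟩ := Multiset.card_pos_iff_exists_mem.1 (hroots.1 ▸ hn)
  obtain ⟨a, -, -, ha, -⟩ :=
    exists_abs_eval_lt_one_on_Ioo_of_isRoot hcrit hP (isRoot_of_mem_roots hr)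
  refine ⟨by rw [supNorm_C_mul_of_abs_eval_eq_one ha, abs_inv, one_div], fun Q hQ hQ0 => ?_⟩
  obtain ⟨x, hx, hQx⟩ := exists_abs_eval_eq_one_le_abs_eval hcrit hP (hroots.1.trans hdeg.symm)
    hroots.2 hc (hdeg ▸ natDegree_le_of_degree_le hQ) hQ0
  have hA : IsCompact {x : ℝ | P.eval x ∈ Set.Icc (-1 : ℝ) 1} :=
    (P.isProperMap_eval hP).isCompact_preimage isCompact_Icc
  rw [one_div, ← abs_inv]
  exact hQx.trans (le_csSup (hA.bddAbove_image Q.continuous.abs.continuousOn)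
    ⟨x, abs_le.1 hx.le, rfl⟩)
end

section
/- Let P be a polynomial of exact degree n with real coefficients, n simple real zeros, |P(y)| ≥ 1 at all critical points y, and let A := {x ∈ ℝ : −1 ≤ P(x) ≤ 1}. If 0 ∉ A but 0 lies in the convex hull of A (i.e., min A < 0 < max A), then L_{n+1}(A) = L_n(A) = 1/|P(0)|, where L_m(A) := min{‖Q‖_A : deg Q ≤ m, Q(0)=1}. -/
/-!
Write `K = P(0)`; `|K| > 1` because `0 ∉ A`. In every gap between consecutive zeros of
`t ↦ t * P t` (the zeros of `P` together with `0`), and beyond the extreme ones, `|P|` takes the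
value `1`: between two zeros of `P` because a critical point there has `|P| ≥ 1`, next to `0`
because `|K| > 1`, and in the outer gaps because `|P| → ∞` or, when `0` is an extreme zero,
because `A` has points on both sides of `0`. This gives `n + 2` points `p₀ < ⋯ < pₙ₊₁` of `A`
with `|P (pⱼ)| = 1` at which `t * P t` alternates in sign.

If `Q` of degree `≤ n + 1` with `Q 0 = 1` had `‖Q‖_A < 1 / |K|`, then `P / K - Q = X * u` with
`deg u ≤ n`, and `u (pⱼ)` would have the sign of `K * pⱼ * P (pⱼ)`: `n + 1` sign changes, one
too many for `u`. The bound is attained by `P / K`, since `|P| ≤ 1` on `A`.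
-/

open Polynomial

open Set Filter

theorem Fin.exists_interlacing {m : ℕ} {q : ℝ → Prop} (y : Fin (m + 1) → ℝ)
    (hfirst : ∃ c < y 0, q c) (hlast : ∃ c > y (Fin.last m), q c)
    (hmid : ∀ i : Fin m, ∃ c ∈ Ioo (y i.castSucc) (y i.succ), q c) :
    ∃ p : Fin (m + 2) → ℝ, (∀ j, q (p j)) ∧
      ∀ i, p i.castSucc < y i ∧ y i < p i.succ := by
  -- `c` lies below `y j` (if `j ≤ m`) and above `y (j - 1)` (if `j ≥ 1`).
  have hcell : ∀ j : Fin (m + 2), ∃ c, q c ∧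
      (∀ i : Fin (m + 1), i.castSucc = j → c < y i) ∧
        (∀ i : Fin (m + 1), i.succ = j → y i < c) := by
    intro j
    induction j using Fin.cases with
    | zero =>
      obtain ⟨c, hlt, hc⟩ := hfirst
      exact ⟨c, hc, fun i hi => by rwa [Fin.castSucc_eq_zero_iff.1 hi],
        fun i hi => absurd hi (Fin.succ_ne_zero i)⟩
    | succ j =>
      induction j using Fin.lastCases with
      | last =>
        obtain ⟨c, hlt, hc⟩ := hlast
        exact ⟨c, hc, fun i hi => absurd hi (by simp [Fin.succ_last]),
          fun i hi => by rwa [Fin.succ_inj.1 hi]⟩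
      | cast j =>
        obtain ⟨c, ⟨hlo, hhi⟩, hc⟩ := hmid j
        refine ⟨c, hc, fun i hi => ?_, fun i hi => ?_⟩
        · rw [Fin.succ_castSucc, Fin.castSucc_inj] at hi
          rwa [hi]
        · rwa [Fin.succ_inj.1 hi]
  choose p hpS hp using hcell
  exact ⟨p, hpS, fun i => ⟨(hp _).1 i rfl, (hp _).2 i rfl⟩⟩

namespace Polynomial

theorem le_natDegree_of_sign_changes {m : ℕ} {u : ℝ[X]} {p : Fin (m + 2) → ℝ}
    (hp : StrictMono p) (h : ∀ i : Fin (m + 1), u.eval (p i.castSucc) * u.eval (p i.succ) < 0) :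
    m + 1 ≤ u.natDegree := by
  have hroot : ∀ i : Fin (m + 1), ∃ r ∈ Ioo (p i.castSucc) (p i.succ), u.eval r = 0 := by
    intro i
    have hle := (hp (Fin.castSucc_lt_succ (i := i))).le
    have hcont := u.continuous.continuousOn (s := Icc (p i.castSucc) (p i.succ))
    rcases mul_neg_iff.1 (h i) with ⟨ha, hb⟩ | ⟨ha, hb⟩
    · exact intermediate_value_Ioo' hle hcont ⟨hb, ha⟩
    · exact intermediate_value_Ioo hle hcont ⟨ha, hb⟩
  choose r hr hr0 using hroot
  have hrmono : StrictMono r := fun i j hij =>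
    (hr i).2.trans ((hp.monotone (Fin.succ_le_castSucc_iff.2 hij)).trans_lt (hr j).1)
  have hu : u ≠ 0 := by
    rintro rfl
    simpa using h 0
  calc m + 1 = (Finset.univ.image r).card := by
        rw [Finset.card_image_of_injective _ hrmono.injective, Finset.card_univ, Fintype.card_fin]
    _ ≤ u.natDegree := card_le_degree_of_subset_roots fun z hz => by
        obtain ⟨i, -, rfl⟩ := Finset.mem_image.1 (Finset.mem_def.2 hz)
        exact (mem_roots hu).2 (hr0 i)

theorem eval_mul_eval_neg_of_mem_roots {W : ℝ[X]} (hsplit : W.roots.card = W.natDegree)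
    {r s t : ℝ} (hr : r ∈ W.roots) (hs : s < r) (ht : r < t)
    (hother : ∀ a ∈ W.roots.erase r, a ∉ Icc s t) : W.eval s * W.eval t < 0 := by
  have heval : ∀ x, W.eval x = W.leadingCoeff * (W.roots.map (x - ·)).prod := fun x => by
    conv_lhs => rw [← C_leadingCoeff_mul_prod_multiset_X_sub_C hsplit]
    simp [eval_multiset_prod, Multiset.map_map]
  have hlc : W.leadingCoeff ≠ 0 := leadingCoeff_ne_zero.2 (ne_zero_of_mem_roots hr)
  obtain ⟨rest, hW⟩ : ∃ rest, W.roots = r ::ₘ rest := ⟨_, (Multiset.cons_erase hr).symm⟩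
  rw [hW, Multiset.erase_cons_head] at hother
  have hrest : 0 < (rest.map fun a => (s - a) * (t - a)).prod :=
    Multiset.prod_pos fun x hx => by
      obtain ⟨a, ha, rfl⟩ := Multiset.mem_map.1 hx
      rcases not_and_or.1 (hother a ha) with h | h <;> push Not at h <;> nlinarith
  have key : W.eval s * W.eval t = W.leadingCoeff ^ 2 * ((s - r) * (t - r)) *
      (rest.map fun a => (s - a) * (t - a)).prod := by
    rw [heval, heval, hW, Multiset.map_cons, Multiset.map_cons,
      Multiset.prod_cons, Multiset.prod_cons, Multiset.prod_map_mul]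
    ring
  rw [key]
  exact mul_neg_of_neg_of_pos (mul_neg_of_pos_of_neg (by positivity)
    (mul_neg_of_neg_of_pos (by linarith) (by linarith))) hrest

theorem eval_mul_eval_neg_of_interlacing {W : ℝ[X]} {m : ℕ}
    (hsplit : W.roots.card = W.natDegree) (hnd : W.roots.Nodup) {y : Fin (m + 1) → ℝ}
    (hroots : ∀ a, a ∈ W.roots ↔ a ∈ range y) {p : Fin (m + 2) → ℝ}
    (hp : ∀ i, p i.castSucc < y i ∧ y i < p i.succ) (i : Fin (m + 1)) :
    W.eval (p i.castSucc) * W.eval (p i.succ) < 0 := by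
  have hpmono : StrictMono p := Fin.strictMono_iff_lt_succ.2 fun i => (hp i).1.trans (hp i).2
  refine eval_mul_eval_neg_of_mem_roots hsplit ((hroots _).2 ⟨i, rfl⟩) (hp i).1 (hp i).2 ?_
  intro a ha hmem
  obtain ⟨hai, ha⟩ := hnd.mem_erase_iff.1 ha
  obtain ⟨j, rfl⟩ := (hroots a).1 ha
  rcases lt_or_gt_of_ne (ne_of_apply_ne y hai) with hji | hij
  · exact hmem.1.not_gt ((hp j).2.trans_le (hpmono.monotone (Fin.succ_le_castSucc_iff.2 hji)))
  · exact hmem.2.not_gt ((hpmono.monotone (Fin.succ_le_castSucc_iff.2 hij)).trans_lt (hp j).1)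

theorem exists_abs_eval_eq_one {P : ℝ[X]} {S : Set ℝ} (hS : S.OrdConnected) {u v : ℝ}
    (hu : u ∈ S) (hv : v ∈ S) (hu1 : |P.eval u| ≤ 1) (hv1 : 1 ≤ |P.eval v|) :
    ∃ c ∈ S, |P.eval c| = 1 :=
  hS.isPreconnected.intermediate_value hu hv P.continuous.abs.continuousOn ⟨hu1, hv1⟩

theorem exists_le_one_le_abs_eval {P : ℝ[X]} (hP : 0 < P.degree) (r : ℝ) :
    ∃ v ≤ r, 1 ≤ |P.eval v| :=
  (((P.abs_tendsto_atBot hP).eventually_ge_atTop 1).and (eventually_le_atBot r)).exists.imp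
    fun _ h => ⟨h.2, h.1⟩

theorem exists_ge_one_le_abs_eval {P : ℝ[X]} (hP : 0 < P.degree) (r : ℝ) :
    ∃ v ≥ r, 1 ≤ |P.eval v| :=
  (((P.abs_tendsto_atTop hP).eventually_ge_atTop 1).and (eventually_ge_atTop r)).exists.imp
    fun _ h => ⟨h.2, h.1⟩

section RootsOfXMul

variable {P : ℝ[X]}

theorem abs_eval_ne_one_of_root (hK : 1 < |P.eval 0|) {r : ℝ} (hr : r = 0 ∨ P.IsRoot r) :
    |P.eval r| ≠ 1 := by
  rcases hr with rfl | hr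
  · exact hK.ne'
  · simp [hr.eq_zero]

theorem exists_lt_abs_eval_eq_one (hP : 0 < P.degree) (hK : 1 < |P.eval 0|)
    (hneg : ∃ a < 0, |P.eval a| ≤ 1) {r : ℝ} (hr : r = 0 ∨ P.IsRoot r) :
    ∃ c < r, |P.eval c| = 1 := by
  obtain ⟨u, hu, v, hv, hu1, hv1⟩ :
      ∃ u ≤ r, ∃ v ≤ r, |P.eval u| ≤ 1 ∧ 1 ≤ |P.eval v| := by
    rcases hr with rfl | hr
    · obtain ⟨a, ha, ha1⟩ := hneg
      exact ⟨a, ha.le, 0, le_rfl, ha1, hK.le⟩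
    · obtain ⟨v, hv, hv1⟩ := exists_le_one_le_abs_eval hP r
      exact ⟨r, le_rfl, v, hv, by simp [hr.eq_zero], hv1⟩
  obtain ⟨c, hc, hc1⟩ := exists_abs_eval_eq_one ordConnected_Iic hu hv hu1 hv1
  exact ⟨c, lt_of_le_of_ne hc (by rintro rfl; exact abs_eval_ne_one_of_root hK hr hc1), hc1⟩

theorem exists_gt_abs_eval_eq_one (hP : 0 < P.degree) (hK : 1 < |P.eval 0|)
    (hpos : ∃ b > 0, |P.eval b| ≤ 1) {r : ℝ} (hr : r = 0 ∨ P.IsRoot r) :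
    ∃ c > r, |P.eval c| = 1 := by
  obtain ⟨u, hu, v, hv, hu1, hv1⟩ :
      ∃ u ≥ r, ∃ v ≥ r, |P.eval u| ≤ 1 ∧ 1 ≤ |P.eval v| := by
    rcases hr with rfl | hr
    · obtain ⟨b, hb, hb1⟩ := hpos
      exact ⟨b, hb.le, 0, le_rfl, hb1, hK.le⟩
    · obtain ⟨v, hv, hv1⟩ := exists_ge_one_le_abs_eval hP r
      exact ⟨r, le_rfl, v, hv, by simp [hr.eq_zero], hv1⟩
  obtain ⟨c, hc, hc1⟩ := exists_abs_eval_eq_one ordConnected_Ici hu hv hu1 hv1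
  exact ⟨c, lt_of_le_of_ne hc (by rintro rfl; exact abs_eval_ne_one_of_root hK hr hc1), hc1⟩

theorem exists_mem_Ioo_abs_eval_eq_one (hcrit : ∀ y, P.derivative.eval y = 0 → 1 ≤ |P.eval y|)
    (hK : 1 < |P.eval 0|) {a b : ℝ} (hab : a < b) (ha : a = 0 ∨ P.IsRoot a)
    (hb : b = 0 ∨ P.IsRoot b) : ∃ c ∈ Ioo a b, |P.eval c| = 1 := by
  obtain ⟨u, hu, v, hv, hu1, hv1⟩ :
      ∃ u ∈ Icc a b, ∃ v ∈ Icc a b, |P.eval u| ≤ 1 ∧ 1 ≤ |P.eval v| := by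
    rcases ha with rfl | ha
    · have hb : P.IsRoot b := hb.resolve_left hab.ne'
      exact ⟨b, right_mem_Icc.2 hab.le, 0, left_mem_Icc.2 hab.le, by simp [hb.eq_zero], hK.le⟩
    rcases hb with rfl | hb
    · exact ⟨a, left_mem_Icc.2 hab.le, 0, right_mem_Icc.2 hab.le, by simp [ha.eq_zero], hK.le⟩
    obtain ⟨y, hy, hy0⟩ := exists_deriv_eq_zero (f := fun t => P.eval t) hab
      P.continuous.continuousOn (ha.eq_zero.trans hb.eq_zero.symm)
    exact ⟨a, left_mem_Icc.2 hab.le, y, Ioo_subset_Icc_self hy, by simp [ha.eq_zero],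
      hcrit y (by rwa [Polynomial.deriv] at hy0)⟩
  obtain ⟨c, hc, hc1⟩ := exists_abs_eval_eq_one ordConnected_Icc hu hv hu1 hv1
  have hne : ∀ r, r = 0 ∨ P.IsRoot r → c ≠ r := by
    rintro r hr rfl; exact abs_eval_ne_one_of_root hK hr hc1
  exact ⟨c, ⟨hc.1.lt_of_ne (hne a ha).symm, hc.2.lt_of_ne (hne b hb)⟩, hc1⟩

end RootsOfXMul

theorem isCompact_setOf_abs_eval_le {P : ℝ[X]} (hP : 0 < P.degree) (M : ℝ) :
    IsCompact {x | |P.eval x| ≤ M} := by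
  obtain ⟨t, ht, hsub⟩ := mem_cocompact.1
    ((P.tendsto_norm_atTop hP tendsto_norm_cocompact_atTop).eventually_gt_atTop M)
  refine ht.of_isClosed_subset (isClosed_le P.continuous.abs continuous_const) fun x hx => ?_
  by_contra hxt
  exact (hsub hxt).not_ge (by simpa using hx)

theorem exists_alternant {P : ℝ[X]} (hP : 0 < P.degree) (hsplit : P.roots.card = P.natDegree)
    (hnd : P.roots.Nodup) (hcrit : ∀ y, P.derivative.eval y = 0 → 1 ≤ |P.eval y|)
    (hK : 1 < |P.eval 0|) (hneg : ∃ a < 0, |P.eval a| ≤ 1)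
    (hpos : ∃ b > 0, |P.eval b| ≤ 1) :
    ∃ p : Fin (P.natDegree + 2) → ℝ, StrictMono p ∧ (∀ j, |P.eval (p j)| = 1) ∧
      ∀ i : Fin (P.natDegree + 1),
        p i.castSucc * P.eval (p i.castSucc) * (p i.succ * P.eval (p i.succ)) < 0 := by
  have hP0 : P ≠ 0 := ne_zero_of_degree_gt hP
  have hroots : (X * P).roots = 0 ::ₘ P.roots := by
    rw [roots_mul (mul_ne_zero X_ne_zero hP0), roots_X, Multiset.singleton_add]
  have hnd' : (X * P).roots.Nodup :=
    hroots ▸ Multiset.nodup_cons.2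
      ⟨fun h => by norm_num [((mem_roots hP0).1 h).eq_zero] at hK, hnd⟩
  have hcard : (X * P).roots.toFinset.card = P.natDegree + 1 := by
    rw [Multiset.toFinset_card_of_nodup hnd', hroots, Multiset.card_cons, hsplit]
  set y := (X * P).roots.toFinset.orderEmbOfFin hcard
  have hy_roots : ∀ a, a ∈ (X * P).roots ↔ a ∈ range y := fun a => by
    rw [Finset.range_orderEmbOfFin, Finset.mem_coe, Multiset.mem_toFinset]
  have hy : ∀ i, y i = 0 ∨ P.IsRoot (y i) := fun i => by
    simpa [hroots, mem_roots hP0] using (hy_roots (y i)).2 ⟨i, rfl⟩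
  obtain ⟨p, hp1, hpy⟩ := Fin.exists_interlacing y
    (exists_lt_abs_eval_eq_one hP hK hneg (hy 0)) (exists_gt_abs_eval_eq_one hP hK hpos (hy _))
    fun i => exists_mem_Ioo_abs_eval_eq_one hcrit hK (y.strictMono Fin.castSucc_lt_succ)
      (hy _) (hy _)
  have hsplit' : (X * P).roots.card = (X * P).natDegree := by
    rw [hroots, Multiset.card_cons, hsplit, natDegree_X_mul hP0]
  refine ⟨p, Fin.strictMono_iff_lt_succ.2 fun i => (hpy i).1.trans (hpy i).2, hp1, fun i => ?_⟩
  simpa using eval_mul_eval_neg_of_interlacing hsplit' hnd' hy_roots hpy i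

theorem exists_one_div_le_abs_eval_of_alternating {m : ℕ} {P Q : ℝ[X]} {p : Fin (m + 2) → ℝ}
    (hp : StrictMono p) (hP : P.natDegree ≤ m + 1) (hQ : Q.natDegree ≤ m + 1)
    (hQ0 : Q.eval 0 = 1) (hP0 : P.eval 0 ≠ 0) (hP1 : ∀ j, 1 ≤ |P.eval (p j)|)
    (halt : ∀ i : Fin (m + 1),
      p i.castSucc * P.eval (p i.castSucc) * (p i.succ * P.eval (p i.succ)) < 0) :
    ∃ j, 1 / |P.eval 0| ≤ |Q.eval (p j)| := by
  set K := P.eval 0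
  by_contra! hsmall
  obtain ⟨u, hu⟩ : X ∣ C K⁻¹ * P - Q :=
    X_dvd_iff.2 (by simp [coeff_zero_eq_eval_zero, K, hQ0, hP0])
  -- At the nodes `|Q| < |P / K|`, so `X * u = P / K - Q` has the sign of `P / K` there.
  have hsign : ∀ j, 0 < K * (p j * P.eval (p j)) * u.eval (p j) := by
    intro j
    have hR : p j * u.eval (p j) = K⁻¹ * P.eval (p j) - Q.eval (p j) := by
      simpa using congr_arg (eval (p j)) hu.symm
    have hKQ : |K| * |Q.eval (p j)| < 1 := by
      have := hsmall j
      rwa [lt_div_iff₀ (abs_pos.2 hP0), mul_comm] at this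
    have hPQ : K * P.eval (p j) * Q.eval (p j) < P.eval (p j) ^ 2 :=
      calc K * P.eval (p j) * Q.eval (p j)
          ≤ |P.eval (p j)| * (|K| * |Q.eval (p j)|) := by
            rw [← abs_mul, ← abs_mul]; exact (le_abs_self _).trans_eq (by ring_nf)
        _ < |P.eval (p j)| * 1 := by gcongr; linarith [hP1 j]
        _ ≤ |P.eval (p j)| ^ 2 := by nlinarith [hP1 j]
        _ = P.eval (p j) ^ 2 := sq_abs _
    calc 0 < P.eval (p j) ^ 2 - K * P.eval (p j) * Q.eval (p j) := by linarith
      _ = K * P.eval (p j) * (p j * u.eval (p j)) := by rw [hR]; field_simp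
      _ = K * (p j * P.eval (p j)) * u.eval (p j) := by ring
  have hu_alt : ∀ i : Fin (m + 1), u.eval (p i.castSucc) * u.eval (p i.succ) < 0 := by
    intro i
    have hpos := mul_pos (hsign i.castSucc) (hsign i.succ)
    rw [show ∀ a b c d : ℝ, K * a * c * (K * b * d) = K ^ 2 * a * b * (c * d) by intros; ring]
      at hpos
    exact neg_of_mul_pos_right hpos (by nlinarith [halt i, sq_nonneg K])
  have hu0 : u ≠ 0 := by
    rintro rfl
    simpa using hu_alt 0
  have hdeg : (X * u).natDegree ≤ m + 1 :=
    hu ▸ (natDegree_sub_le _ _).trans (max_le (natDegree_C_mul_le _ _ |>.trans hP) hQ)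
  rw [natDegree_X_mul hu0] at hdeg
  linarith [le_natDegree_of_sign_changes hp hu_alt]

end Polynomial

theorem minimal_residual_gap (n : ℕ) (hn : 1 ≤ n) (P : ℝ[X])
    (hdeg : P.natDegree = n)
    (hroots : P.roots.card = n ∧ P.roots.Nodup)
    (hcrit : ∀ y : ℝ, P.derivative.eval y = 0 → 1 ≤ |P.eval y|)
    (A : Set ℝ) (hA : A = {x : ℝ | P.eval x ∈ Set.Icc (-1 : ℝ) 1})
    (h0 : (0 : ℝ) ∉ A)
    (hhull : (∃ x ∈ A, x < 0) ∧ (∃ y ∈ A, 0 < y)) :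
    supNorm A (Polynomial.C (P.eval 0)⁻¹ * P) = 1 / |P.eval 0| ∧
    (∀ Q : ℝ[X], Q.degree ≤ n → Q.eval 0 = 1 → 1 / |P.eval 0| ≤ supNorm A Q) ∧
    (∀ Q : ℝ[X], Q.degree ≤ (n + 1 : ℕ) → Q.eval 0 = 1 → 1 / |P.eval 0| ≤ supNorm A Q) := by
  subst hdeg
  have hmemA : ∀ x, x ∈ A ↔ |P.eval x| ≤ 1 := fun x => by rw [hA, abs_le]; rfl
  have hK : 1 < |P.eval 0| := lt_of_not_ge fun h => h0 ((hmemA 0).2 h)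
  have hP : 0 < P.degree := natDegree_pos_iff_degree_pos.1 hn
  obtain ⟨p, hp, hp1, halt⟩ := exists_alternant hP hroots.1 hroots.2 hcrit hK
    (hhull.1.imp fun a ha => ⟨ha.2, (hmemA a).1 ha.1⟩)
    (hhull.2.imp fun b hb => ⟨hb.2, (hmemA b).1 hb.1⟩)
  have hpA : ∀ j, p j ∈ A := fun j => (hmemA _).2 (hp1 j).le
  have hAcpt : IsCompact A := by
    convert isCompact_setOf_abs_eval_le hP 1 using 1
    ext x; exact hmemA x
  have hlower : ∀ Q : ℝ[X], Q.degree ≤ (P.natDegree + 1 : ℕ) → Q.eval 0 = 1 →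
      1 / |P.eval 0| ≤ supNorm A Q := by
    intro Q hQ hQ0
    obtain ⟨j, hj⟩ := exists_one_div_le_abs_eval_of_alternating hp P.natDegree.le_succ
      (natDegree_le_of_degree_le hQ) hQ0 (abs_pos.1 (one_pos.trans hK)) (fun j => (hp1 j).ge) halt
    exact hj.trans (le_csSup (hAcpt.image_of_continuousOn Q.continuous.abs.continuousOn).bddAbove
      ⟨p j, hpA j, rfl⟩)
  refine ⟨?_, fun Q hQ => hlower Q (hQ.trans (by exact_mod_cast P.natDegree.le_succ)), hlower⟩
  refine IsGreatest.csSup_eq ⟨⟨p 0, hpA 0, by simp [abs_mul, hp1]⟩, ?_⟩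
  rintro _ ⟨x, hx, rfl⟩
  simpa [abs_mul] using mul_le_of_le_one_right (by positivity) ((hmemA x).1 hx)
end

section
/- Let n ∈ ℕ, and let S ⊆ ℝ be compact with at least n+1 points and 0 ∉ S. Then the minimal residual polynomial R_n for degree n on S has exact degree n or exact degree n−1. -/
/-!
If `R` had degree at most `n - 2`, then `R * (1 - ε X²)` would still be an admissible competitor
of degree at most `n`. Since `0 ∉ S` and `S` is bounded, a small `ε > 0` makes `|1 - ε x²| < 1` on
all of `S`, and `R` cannot vanish on the `n + 1` points of `S`; by compactness the competitor then
has strictly smaller sup norm than `R`, contradicting minimality.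
-/

open Polynomial

namespace Polynomial

variable {R : Type*} [CommRing R] [IsDomain R] {p : R[X]} {S : Set R}

lemma encard_le_natDegree_of_forall_eval_eq_zero (hp : p ≠ 0) (h : ∀ x ∈ S, p.eval x = 0) :
    S.encard ≤ p.natDegree := by
  classical
  calc S.encard ≤ (p.roots.toFinset : Set R).encard :=
        Set.encard_le_encard fun x hx => by simpa [hp] using h x hx
    _ = p.roots.toFinset.card := Set.encard_coe_eq_coe_finsetCard _
    _ ≤ p.natDegree := by exact_mod_cast (Multiset.toFinset_card_le _).trans (card_roots' p)

lemma exists_mem_eval_ne_zero_of_natDegree_lt_encard (hp : p ≠ 0)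
    (hS : (p.natDegree : ℕ∞) < S.encard) : ∃ x ∈ S, p.eval x ≠ 0 := by
  by_contra! h
  exact (hS.trans_le (encard_le_natDegree_of_forall_eval_eq_zero hp h)).false

end Polynomial

section supNorm

variable {S : Set ℝ} {P Q : ℝ[X]}

lemma abs_eval_le_supNorm_s9 (hS : IsCompact S) {x : ℝ} (hx : x ∈ S) : |P.eval x| ≤ supNorm S P :=
  le_csSup (hS.image P.continuous.abs).bddAbove ⟨x, hx, rfl⟩

lemma supNorm_nonneg : 0 ≤ supNorm S P :=
  Real.sSup_nonneg (by rintro _ ⟨x, -, rfl⟩; exact abs_nonneg _)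

lemma exists_supNorm_eq (hS : IsCompact S) (hne : S.Nonempty) :
    ∃ x ∈ S, supNorm S P = |P.eval x| :=
  hS.exists_sSup_image_eq hne P.continuous.abs.continuousOn

lemma supNorm_pos (hS : IsCompact S) (hP : ∃ x ∈ S, P.eval x ≠ 0) : 0 < supNorm S P := by
  obtain ⟨x, hx, hPx⟩ := hP
  exact (abs_pos.mpr hPx).trans_le (abs_eval_le_supNorm_s9 hS hx)

lemma supNorm_mul_le (hS : IsCompact S) : supNorm S (P * Q) ≤ supNorm S P * supNorm S Q := by
  refine Real.sSup_le ?_ (mul_nonneg supNorm_nonneg supNorm_nonneg)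
  rintro _ ⟨x, hx, rfl⟩
  simp only [eval_mul, abs_mul]
  exact mul_le_mul (abs_eval_le_supNorm_s9 hS hx) (abs_eval_le_supNorm_s9 hS hx) (abs_nonneg _)
    supNorm_nonneg

lemma supNorm_lt_one (hS : IsCompact S) (hne : S.Nonempty) (hQ : ∀ x ∈ S, |Q.eval x| < 1) :
    supNorm S Q < 1 := by
  obtain ⟨x, hx, hQx⟩ := exists_supNorm_eq (P := Q) hS hne
  exact hQx ▸ hQ x hx

lemma supNorm_mul_lt (hS : IsCompact S) (hP : ∃ x ∈ S, P.eval x ≠ 0)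
    (hQ : ∀ x ∈ S, |Q.eval x| < 1) : supNorm S (P * Q) < supNorm S P := by
  calc supNorm S (P * Q) ≤ supNorm S P * supNorm S Q := supNorm_mul_le hS
    _ < supNorm S P * 1 :=
      mul_lt_mul_of_pos_left (supNorm_lt_one hS (hP.imp fun _ => And.left) hQ) (supNorm_pos hS hP)
    _ = supNorm S P := mul_one _

end supNorm

lemma exists_forall_abs_one_sub_mul_sq_lt_one {S : Set ℝ} (hS : Bornology.IsBounded S)
    (h0 : (0 : ℝ) ∉ S) : ∃ ε : ℝ, ∀ x ∈ S, |1 - ε * x ^ 2| < 1 := by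
  obtain ⟨M, hM⟩ := hS.exists_norm_le
  refine ⟨1 / (M ^ 2 + 1), fun x hx => ?_⟩
  have hx0 : x ≠ 0 := fun h => h0 (h ▸ hx)
  have hxM : x ^ 2 < M ^ 2 + 1 :=
    calc x ^ 2 = ‖x‖ ^ 2 := (Real.norm_eq_abs x ▸ sq_abs x).symm
      _ ≤ M ^ 2 := pow_le_pow_left₀ (norm_nonneg x) (hM x hx) 2
      _ < M ^ 2 + 1 := lt_add_one _
  have hpos : 0 < 1 / (M ^ 2 + 1) * x ^ 2 := by positivity
  have hlt : 1 / (M ^ 2 + 1) * x ^ 2 < 1 := by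
    rwa [one_div_mul_eq_div, div_lt_one (by positivity)]
  exact abs_lt.mpr ⟨by linarith, by linarith⟩

theorem minimal_residual_degree (n : ℕ) (S : Set ℝ) (hS : IsCompact S)
    (h0 : (0 : ℝ) ∉ S) (hcard : (n + 1 : ℕ∞) ≤ S.encard)
    (R : ℝ[X]) (hdeg : R.degree ≤ n) (hR0 : R.eval 0 = 1)
    (hmin : ∀ Q : ℝ[X], Q.degree ≤ n → Q.eval 0 = 1 → supNorm S R ≤ supNorm S Q) :
    R.degree = (n : ℕ) ∨ R.degree = (n - 1 : ℕ) := by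
  have hR : R ≠ 0 := by rintro rfl; simp at hR0
  have hdn : R.natDegree ≤ n := natDegree_le_iff_degree_le.mpr hdeg
  by_contra hR_low
  have hd2 : R.natDegree + 2 ≤ n := by
    simp only [degree_eq_natDegree hR, Nat.cast_inj] at hR_low
    omega
  obtain ⟨ε, hε⟩ := exists_forall_abs_one_sub_mul_sq_lt_one hS.isBounded h0
  set Q := R * (1 - C ε * X ^ 2)
  have hQdeg : Q.degree ≤ n := by
    refine degree_le_of_natDegree_le (natDegree_mul_le.trans ?_)
    have : (1 - C ε * X ^ 2).natDegree ≤ 2 := by compute_degree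
    omega
  have hRS : ∃ x ∈ S, R.eval x ≠ 0 :=
    exists_mem_eval_ne_zero_of_natDegree_lt_encard hR
      (lt_of_lt_of_le (by exact_mod_cast Nat.lt_succ_of_le hdn) hcard)
  have hQ0 : Q.eval 0 = 1 := by simp [Q, hR0]
  exact (hmin Q hQdeg hQ0).not_gt (supNorm_mul_lt hS hRS (by simpa using hε))
end

section
/- Let n ∈ ℕ, S ⊆ ℝ compact with at least n+1 points and 0 ∉ S, and let R_n be the minimal residual polynomial for degree n on S, with all extremal points x₀ < ... < xₙ (from the alternation characterization) satisfying 0 ∉ [x₀, xₙ]. Then R_n has n simple real zeros ξ₁ < ... < ξₙ interlacing the extremal points: x₀ < ξ₁ < x₁ < ξ₂ < ... < ξₙ < xₙ. -/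
/-! Between two consecutive extremal points `R` changes sign, so by the intermediate value theorem
it has a zero strictly between them. This gives `n` distinct zeros, and since `deg R ≤ n` these
are all the roots of `R`, each simple. The extremal values themselves cannot vanish: `|R|` takes
the same value at all `n + 1` points, so otherwise `R` would have too many roots. -/

open Polynomial

open Set

theorem exists_mem_Ioo_eq_zero_of_eq_neg {α δ : Type*} [ConditionallyCompleteLinearOrder α]
    [TopologicalSpace α] [OrderTopology α] [DenselyOrdered α]
    [AddCommGroup δ] [LinearOrder δ] [IsOrderedAddMonoid δ] [TopologicalSpace δ]
    [OrderClosedTopology δ]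
    {a b : α} (hab : a ≤ b) {f : α → δ} (hf : ContinuousOn f (Icc a b))
    (hfa : f a ≠ 0) (hneg : f a = -f b) : ∃ c ∈ Ioo a b, f c = 0 := by
  rcases hfa.lt_or_gt with hlt | hgt
  · have hfb : 0 < f b := neg_neg_iff_pos.mp (hneg ▸ hlt)
    exact intermediate_value_Ioo hab hf ⟨hlt, hfb⟩
  · have hfb : f b < 0 := neg_pos.mp (hneg ▸ hgt)
    exact intermediate_value_Ioo' hab hf ⟨hfb, hgt⟩

theorem Fin.strictMono_of_interlace {α : Type*} [Preorder α] {n : ℕ} {x : Fin (n + 1) → α}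
    (hx : Monotone x) {ξ : Fin n → α} (hξ : ∀ j, x j.castSucc < ξ j ∧ ξ j < x j.succ) :
    StrictMono ξ := fun i j hij =>
  calc ξ i < x i.succ := (hξ i).2
    _ ≤ x j.castSucc := hx (Fin.succ_le_castSucc_iff.mpr hij)
    _ < ξ j := (hξ j).1

namespace Polynomial

variable {R : Type*} [CommRing R] [IsDomain R]

theorem roots_eq_val_of_card_roots_le {p : R[X]} (hp : p ≠ 0) {s : Finset R}
    (hs : ∀ a ∈ s, p.IsRoot a) (hcard : p.roots.card ≤ s.card) : p.roots = s.val := by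
  refine (Multiset.eq_of_le_of_card_le ?_ hcard).symm
  rw [Multiset.le_iff_subset s.nodup]
  exact fun a ha => (mem_roots hp).mpr (hs a ha)

theorem eval_ne_zero_of_abs_eval_eq [LinearOrder R] [IsOrderedRing R] {p : R[X]} (hp : p ≠ 0)
    {ι : Type*} [Fintype ι] (hcard : p.natDegree < Fintype.card ι) {x : ι → R}
    (hx : Function.Injective x) {L : R}
    (habs : ∀ i, |p.eval (x i)| = L) (i : ι) : p.eval (x i) ≠ 0 := by
  intro hi
  have hL : L = 0 := by rw [← habs i, hi, abs_zero]
  exact hp (eq_zero_of_natDegree_lt_card_of_eval_eq_zero p hx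
    (fun k => abs_eq_zero.mp ((habs k).trans hL)) hcard)

end Polynomial

theorem interlacing_zeros_general (n : ℕ) (S : Set ℝ)
    (R : ℝ[X]) (hdeg : R.degree ≤ n) (hR0 : R.eval 0 = 1)
    (x : Fin (n + 1) → ℝ) (hmono : StrictMono x)
    (hext : ∀ j, |R.eval (x j)| = supNorm S R)
    (halt : ∀ j : Fin n, R.eval (x j.castSucc) = -R.eval (x j.succ)) :
    ∃ ξ : Fin n → ℝ, StrictMono ξ ∧ (∀ j, R.eval (ξ j) = 0) ∧
      (∀ j : Fin n, x j.castSucc < ξ j ∧ ξ j < x j.succ) ∧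
      R.roots.card = n ∧ R.roots.Nodup := by
  have hR : R ≠ 0 := by rintro rfl; simp at hR0
  have hnatDeg : R.natDegree ≤ n := natDegree_le_iff_degree_le.mpr hdeg
  have hne : ∀ j, R.eval (x j) ≠ 0 :=
    eval_ne_zero_of_abs_eval_eq hR (by simpa using Nat.lt_succ_of_le hnatDeg) hmono.injective hext
  have hzero (j : Fin n) : ∃ c ∈ Ioo (x j.castSucc) (x j.succ), R.eval c = 0 :=
    exists_mem_Ioo_eq_zero_of_eq_neg (hmono Fin.castSucc_lt_succ).le R.continuousOn_aeval
      (hne _) (halt j)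
  choose ξ hξ hξ0 using hzero
  have hξmono : StrictMono ξ := Fin.strictMono_of_interlace hmono.monotone hξ
  have hroots : R.roots = (Finset.univ.image ξ).val := by
    refine roots_eq_val_of_card_roots_le hR (by simpa using hξ0) ?_
    rw [Finset.card_image_of_injective _ hξmono.injective, Finset.card_univ, Fintype.card_fin]
    exact R.card_roots'.trans hnatDeg
  refine ⟨ξ, hξmono, hξ0, hξ, ?_, hroots ▸ Finset.nodup _⟩
  rw [hroots, Finset.card_val, Finset.card_image_of_injective _ hξmono.injective,
    Finset.card_univ, Fintype.card_fin]

theorem interlacing_zeros (n : ℕ) (S : Set ℝ) (hS : IsCompact S)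
    (h0 : (0 : ℝ) ∉ S) (hcard : (n + 1 : ℕ∞) ≤ S.encard)
    (R : ℝ[X]) (hdeg : R.degree ≤ n) (hR0 : R.eval 0 = 1)
    (hmin : ∀ Q : ℝ[X], Q.degree ≤ n → Q.eval 0 = 1 → supNorm S R ≤ supNorm S Q)
    (x : Fin (n + 1) → ℝ) (hmono : StrictMono x) (hxS : ∀ j, x j ∈ S)
    (hext : ∀ j, |R.eval (x j)| = supNorm S R)
    (halt : ∀ j : Fin n, R.eval (x j.castSucc) = -R.eval (x j.succ))
    (hgap : (0 : ℝ) ∉ Set.Icc (x 0) (x (Fin.last n))) :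
    ∃ ξ : Fin n → ℝ, StrictMono ξ ∧ (∀ j, R.eval (ξ j) = 0) ∧
      (∀ j : Fin n, x j.castSucc < ξ j ∧ ξ j < x j.succ) ∧
      R.roots.card = n ∧ R.roots.Nodup :=
  interlacing_zeros_general n S R hdeg hR0 x hmono hext halt
end

section
/- Let P be a real polynomial of exact degree n ≥ 1 with n simple real zeros and |P(y)| ≥ 1 for all critical points y, let A := {x ∈ ℝ : −1 ≤ P(x) ≤ 1}, and let x₀ ∈ ℝ \ A. Then for every polynomial Q of degree at most n, |Q(x₀)| ≤ ‖Q‖_A · |P(x₀)|, where ‖Q‖_A := sup_{x∈A}|Q(x)|. -/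
/-!
Suppose `|Q x₀| > M |P x₀|` with `M = ‖Q‖_A`, and put `R = Q(x₀) P - P(x₀) Q`, a polynomial of
degree at most `n` vanishing at `x₀`. Every root `z` of `P` lies in a maximal open interval
`(u, v)` on which `|P| < 1`. Since all critical values of `P` have modulus at least `1`, Rolle's
theorem makes `P` injective on `[u, v]`: hence `P u = -P v = ±1`, and the intervals of distinct roots
are disjoint. Because `|P(x₀) Q| ≤ M |P(x₀)| < |Q(x₀)|` on `A`, the sign of `R` at `u` and `v` is that of
`Q(x₀) P`, so `R` has a root in each of these `n` intervals. Together with `x₀ ∉ A` this gives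
`n + 1` roots of the nonzero polynomial `R`, a contradiction.
-/

open Polynomial

open Set Filter

theorem exists_mem_Ioo_eq_zero_of_mul_neg {α : Type*} [ConditionallyCompleteLinearOrder α]
    [TopologicalSpace α] [OrderTopology α] [DenselyOrdered α] {f : α → ℝ} {a b : α}
    (hab : a ≤ b) (hf : ContinuousOn f (Icc a b)) (h : f a * f b < 0) :
    ∃ c ∈ Ioo a b, f c = 0 := by
  rcases mul_neg_iff.1 h with ⟨ha, hb⟩ | ⟨ha, hb⟩
  · exact intermediate_value_Ioo' hab hf ⟨hb, ha⟩
  · exact intermediate_value_Ioo hab hf ⟨ha, hb⟩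

theorem sub_mul_neg_sub_neg_of_abs_lt {α : Type*} [Ring α] [LinearOrder α] [IsStrictOrderedRing α]
    {a b c : α} (ha : |a| < |c|) (hb : |b| < |c|) : (c - a) * (-c - b) < 0 := by
  rcases le_total 0 c with hc | hc
  · rw [abs_of_nonneg hc, abs_lt] at ha hb
    exact mul_neg_of_pos_of_neg (sub_pos.2 ha.2) (sub_neg.2 hb.1)
  · rw [abs_of_nonpos hc, abs_lt, neg_neg] at ha hb
    exact mul_neg_of_neg_of_pos (sub_neg.2 ha.1) (sub_pos.2 hb.2)

theorem exists_lt_eq_forall_Ioc_lt {f : ℝ → ℝ} (hf : Continuous f) {b z c : ℝ} (hbz : b ≤ z)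
    (hb : c ≤ f b) (hz : f z < c) : ∃ u < z, f u = c ∧ ∀ t ∈ Ioc u z, f t < c := by
  set K := Icc b z ∩ f ⁻¹' {c}
  have hK : IsClosed K := isClosed_Icc.inter (isClosed_singleton.preimage hf)
  have hbdd : BddAbove K := ⟨z, fun t ht => ht.1.2⟩
  obtain ⟨u, hu, hfu⟩ := intermediate_value_Icc' hbz hf.continuousOn ⟨hz.le, hb⟩
  obtain ⟨⟨hbK, hKz⟩, hfK⟩ := hK.csSup_mem ⟨u, hu, hfu⟩ hbdd
  refine ⟨sSup K, hKz.lt_of_ne fun h => hz.ne (h ▸ hfK), hfK, fun t ht => ?_⟩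
  by_contra! hct
  obtain ⟨s, hs, hfs⟩ := intermediate_value_Icc' ht.2 hf.continuousOn ⟨hz.le, hct⟩
  have : s ≤ sSup K := le_csSup hbdd ⟨⟨by linarith [ht.1, hs.1], hs.2⟩, hfs⟩
  linarith [ht.1, hs.1]

theorem exists_gt_eq_forall_Ico_lt {f : ℝ → ℝ} (hf : Continuous f) {b z c : ℝ} (hzb : z ≤ b)
    (hb : c ≤ f b) (hz : f z < c) : ∃ v > z, f v = c ∧ ∀ t ∈ Ico z v, f t < c := by
  obtain ⟨u, hu, hfu, h⟩ := exists_lt_eq_forall_Ioc_lt (f := fun x => f (-x))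
    (hf.comp continuous_neg) (neg_le_neg hzb) (by simpa) (by simpa)
  exact ⟨-u, by linarith, hfu, fun t ht => by
    simpa using h (-t) ⟨by linarith [ht.2], by linarith [ht.1]⟩⟩

namespace Polynomial

variable {P : ℝ[X]}

theorem eval_ne_eval_of_abs_eval_lt_one (hcrit : ∀ y, P.derivative.eval y = 0 → 1 ≤ |P.eval y|)
    {a b : ℝ} (hab : a < b) (h : ∀ t ∈ Ioo a b, |P.eval t| < 1) : P.eval a ≠ P.eval b := by
  intro heq
  obtain ⟨c, hc, hdc⟩ := exists_deriv_eq_zero hab P.continuous.continuousOn heq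
  rw [Polynomial.deriv] at hdc
  exact (h c hc).not_ge (hcrit c hdc)

theorem injOn_of_abs_eval_lt_one (hcrit : ∀ y, P.derivative.eval y = 0 → 1 ≤ |P.eval y|)
    {s : Set ℝ} (hs : s.OrdConnected) (h : ∀ t ∈ s, |P.eval t| < 1) :
    s.InjOn (fun x => P.eval x) := by
  intro x hx y hy hxy
  by_contra hne
  rcases lt_or_gt_of_ne hne with hlt | hlt
  · exact eval_ne_eval_of_abs_eval_lt_one hcrit hlt
      (fun t ht => h t (hs.out hx hy (Ioo_subset_Icc_self ht))) hxy
  · exact eval_ne_eval_of_abs_eval_lt_one hcrit hlt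
      (fun t ht => h t (hs.out hy hx (Ioo_subset_Icc_self ht))) hxy.symm

theorem exists_Ioo_abs_eval_lt_one_s15 (hdeg : 0 < P.degree)
    (hcrit : ∀ y, P.derivative.eval y = 0 → 1 ≤ |P.eval y|) {z : ℝ} (hz : |P.eval z| < 1) :
    ∃ u v, z ∈ Ioo u v ∧ (∀ t ∈ Ioo u v, |P.eval t| < 1) ∧
      |P.eval u| = 1 ∧ P.eval v = -P.eval u := by
  obtain ⟨a, ha, haz⟩ :=
    ((P.abs_tendsto_atBot hdeg).eventually_ge_atTop 1 |>.and (eventually_le_atBot z)).exists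
  obtain ⟨b, hb, hzb⟩ :=
    ((P.abs_tendsto_atTop hdeg).eventually_ge_atTop 1 |>.and (eventually_ge_atTop z)).exists
  obtain ⟨u, huz, hu, hlt_u⟩ := exists_lt_eq_forall_Ioc_lt P.continuous.abs haz ha hz
  obtain ⟨v, hzv, hv, hlt_v⟩ := exists_gt_eq_forall_Ico_lt P.continuous.abs hzb hb hz
  have hI : ∀ t ∈ Ioo u v, |P.eval t| < 1 := fun t ht =>
    (le_or_gt t z).elim (fun h => hlt_u t ⟨ht.1, h⟩) (fun h => hlt_v t ⟨h.le, ht.2⟩)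
  refine ⟨u, v, ⟨huz, hzv⟩, hI, hu, ?_⟩
  rcases abs_eq_abs.1 (hv.trans hu.symm) with h | h
  · exact absurd h.symm (eval_ne_eval_of_abs_eval_lt_one hcrit (huz.trans hzv) hI)
  · exact h

theorem C_mul_sub_C_mul_eval_mul_eval_neg {Q : ℝ[X]} {a b M : ℝ}
    (hQ : ∀ t, |P.eval t| ≤ 1 → |Q.eval t| ≤ M) (hab : M * |b| < |a|) {u v : ℝ}
    (hu : |P.eval u| = 1) (hv : P.eval v = -P.eval u) :
    (C a * P - C b * Q).eval u * (C a * P - C b * Q).eval v < 0 := by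
  have hsmall : ∀ t, |P.eval t| = 1 → |b * Q.eval t| < |a * P.eval u| := by
    intro t ht
    rw [abs_mul, abs_mul, hu, mul_one, mul_comm]
    exact (mul_le_mul_of_nonneg_right (hQ t ht.le) (abs_nonneg _)).trans_lt hab
  simpa [hv] using
    sub_mul_neg_sub_neg_of_abs_lt (hsmall u hu) (hsmall v (by rw [hv, abs_neg, hu]))

theorem exists_finset_subset_roots_of_sign_change {R : ℝ[X]} (hdeg : 0 < P.degree)
    (hcrit : ∀ y, P.derivative.eval y = 0 → 1 ≤ |P.eval y|)
    (hR : ∀ u v, |P.eval u| = 1 → P.eval v = -P.eval u → R.eval u * R.eval v < 0)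
    (Z₀ : Finset ℝ) (hZ₀ : ∀ z ∈ Z₀, P.eval z = 0) :
    ∃ Z : Finset ℝ, Z.card = Z₀.card ∧ Z.val ⊆ R.roots ∧ ∀ r ∈ Z, |P.eval r| < 1 := by
  have hroot : ∀ z ∈ Z₀, ∃ r, (∃ u v, z ∈ Ioo u v ∧ r ∈ Ioo u v ∧
      ∀ t ∈ Ioo u v, |P.eval t| < 1) ∧ r ∈ R.roots := by
    intro z hz
    obtain ⟨u, v, hzI, hI, hu, hv⟩ :=
      exists_Ioo_abs_eval_lt_one_s15 hdeg hcrit (z := z) (by simp [hZ₀ z hz])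
    have hRuv := hR u v hu hv
    obtain ⟨r, hr, hRr⟩ := exists_mem_Ioo_eq_zero_of_mul_neg (hzI.1.trans hzI.2).le
      R.continuous.continuousOn hRuv
    exact ⟨r, ⟨u, v, hzI, hr, hI⟩, (mem_roots (by rintro rfl; simp at hRuv)).2 hRr⟩
  choose! r hrI hrR using hroot
  refine ⟨Z₀.image r, Finset.card_image_of_injOn ?_, ?_, ?_⟩
  · intro z hz z' hz' hrr
    obtain ⟨u, v, hzI, hrz, hI⟩ := hrI z hz
    obtain ⟨u', v', hzI', hrz', hI'⟩ := hrI z' hz'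
    rw [Finset.mem_coe] at hz hz'
    rw [hrr] at hrz
    have hunion : Ioo u v ∪ Ioo u' v' = Ioo (min u u') (max v v') :=
      Ioo_union_Ioo' (hrz'.1.trans hrz.2) (hrz.1.trans hrz'.2)
    refine injOn_of_abs_eval_lt_one hcrit (hunion ▸ ordConnected_Ioo) ?_ (Or.inl hzI)
      (Or.inr hzI') (by simp only [hZ₀ z hz, hZ₀ z' hz'])
    rintro t (ht | ht)
    exacts [hI t ht, hI' t ht]
  · intro x hx
    obtain ⟨z, hz, rfl⟩ := Finset.mem_image.1 hx
    exact hrR z hz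
  · intro x hx
    obtain ⟨z, hz, rfl⟩ := Finset.mem_image.1 hx
    obtain ⟨u, v, -, hr, hI⟩ := hrI z hz
    exact hI _ hr

end Polynomial

theorem bernstein_walsh_inverse_image (n : ℕ) (hn : 1 ≤ n) (P : ℝ[X])
    (hdeg : P.natDegree = n)
    (hroots : P.roots.card = n ∧ P.roots.Nodup)
    (hcrit : ∀ y : ℝ, P.derivative.eval y = 0 → 1 ≤ |P.eval y|)
    (A : Set ℝ) (hA : A = {x : ℝ | P.eval x ∈ Set.Icc (-1 : ℝ) 1})
    (x₀ : ℝ) (hx₀ : x₀ ∉ A) :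
    ∀ Q : ℝ[X], Q.degree ≤ n → |Q.eval x₀| ≤ supNorm A Q * |P.eval x₀| := by
  intro Q hQ
  have hdeg_pos : 0 < P.degree := natDegree_pos_iff_degree_pos.1 (hdeg ▸ hn)
  have hmemA : ∀ t, t ∈ A ↔ |P.eval t| ≤ 1 := by simp [hA, abs_le]
  have hA_cpt : IsCompact A := by
    rw [hA]
    exact (P.isProperMap_eval hdeg_pos).isCompact_preimage isCompact_Icc
  have hQM : ∀ t, |P.eval t| ≤ 1 → |Q.eval t| ≤ supNorm A Q := fun t ht =>
    le_csSup (hA_cpt.image Q.continuous.abs).bddAbove ⟨t, (hmemA t).2 ht, rfl⟩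
  have hPx₀ : 1 < |P.eval x₀| := not_le.1 fun h => hx₀ ((hmemA x₀).2 h)
  by_contra! hlt
  set R := C (Q.eval x₀) * P - C (P.eval x₀) * Q
  have hRdeg : R.natDegree ≤ n := (natDegree_sub_le _ _).trans (max_le
    ((natDegree_C_mul_le _ _).trans hdeg.le)
    ((natDegree_C_mul_le _ _).trans (natDegree_le_of_degree_le hQ)))
  have hcard : P.roots.toFinset.card = n := by
    rw [Multiset.toFinset_card_of_nodup hroots.2, hroots.1]
  obtain ⟨Z, hZcard, hZR, hZP⟩ := exists_finset_subset_roots_of_sign_change hdeg_pos hcrit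
    (fun u v => C_mul_sub_C_mul_eval_mul_eval_neg hQM hlt)
    P.roots.toFinset fun z hz => (mem_roots'.1 (Multiset.mem_toFinset.1 hz)).2
  obtain ⟨r, hr⟩ := Finset.card_pos.1 (by omega : 0 < Z.card)
  have hR0 : R ≠ 0 := ne_zero_of_mem_roots (hZR hr)
  have hx₀Z : x₀ ∉ Z := fun h => (hZP x₀ h).not_gt hPx₀
  have := card_le_degree_of_subset_roots (p := R) (Z := insert x₀ Z) fun x hx => by
    rcases Finset.mem_insert.1 hx with rfl | hx
    exacts [(mem_roots hR0).2 (by simp [R, mul_comm]), hZR hx]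
  rw [Finset.card_insert_of_notMem hx₀Z] at this
  omega
end
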